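/- arXiv:1311.7666 — 5 statements merged into one kernel-verified Lean document; each statement's English description precedes it below -/
import Mathlib

section
/- Let S be a K-algebra with a pseudo-degree function χ, let a ∈ S with χ(a) > 0 be such that C_S(a) satisfies condition D(ℓ) for some ℓ > 0, and let b₁ = 1, b₂, b₃, … be a sequence in C_S(a) where each b_{k+1} is chosen with χ(b_{k+1}) minimal subject to b_{k+1} not lying in the K[a]-span of {b₁,…,b_k}. Then for any φ₁,…,φ_k ∈ K[a], one has χ(Σᵢ φᵢ bᵢ) = maxᵢ (χ(φᵢ) + χ(bᵢ)). -/
/-!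
Suppose `χ (∑ φᵢ(a) bᵢ)` is strictly below `M = maxᵢ (χ(φᵢ(a)) + χ(bᵢ))`, and let `t` be the
largest index attaining `M`. Since `χ(φᵢ(a)) = deg φᵢ · χ(a)` and `i ↦ χ(bᵢ)` is monotone, `φ_t`
has the least degree among the indices attaining `M`, so the top-degree parts of these terms add
up to `a ^ deg φ_t * w` with `w = lc(φ_t) b_t + (a K[a]-combination of b₀, …, b_{t-1})`. These
parts cancel to below `M`, so `χ(w) < χ(b_t)`; but `w` lies in `C_S(a)` outside the `K[a]`-span
of `b₀, …, b_{t-1}`, contradicting the minimal choice of `b_t`.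
-/

open Polynomial

/-- A pseudo-degree function on a ring `S`: a valuation-like map
`χ : S → ℤ ∪ {-∞}` with `χ a = -∞ ↔ a = 0`, `χ (ab) = χ a + χ b` and
`χ (a+b) ≤ max (χ a) (χ b)`. -/
structure IsPseudoDegree {S : Type*} [Ring S] (χ : S → WithBot ℤ) : Prop where
  eq_bot_iff : ∀ a : S, χ a = ⊥ ↔ a = 0
  map_mul : ∀ a b : S, χ (a * b) = χ a + χ b
  add_le : ∀ a b : S, χ (a + b) ≤ max (χ a) (χ b)

/-- Condition `D(ℓ)` for a subalgebra `B` of `S`: every nonzero element of `B`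
has `χ`-value `≥ 0`, and any `ℓ+1` elements of `B` all mapped to the same
integer by `χ` admit a nontrivial `K`-linear combination of strictly smaller
`χ`-value. -/
def CondD {K S : Type*} [Field K] [Ring S] [Algebra K S] (χ : S → WithBot ℤ)
    (B : Subalgebra K S) (ℓ : ℕ) : Prop :=
  (∀ b ∈ B, b ≠ 0 → 0 ≤ χ b) ∧
  ∀ b : Fin (ℓ + 1) → S, (∀ i, b i ∈ B) → (∀ i, χ (b i) = χ (b 0)) → χ (b 0) ≠ ⊥ →
    ∃ α : Fin (ℓ + 1) → K, α ≠ 0 ∧ χ (∑ i, α i • b i) < χ (b 0)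

open Finset

lemma WithBot.nsmul_ne_bot {α : Type*} [AddMonoid α] {x : WithBot α} (hx : x ≠ ⊥) (n : ℕ) :
    n • x ≠ ⊥ := by
  lift x to α using hx
  rw [← WithBot.coe_nsmul]
  exact WithBot.coe_ne_bot

lemma WithBot.nsmul_lt_nsmul_of_pos {α : Type*} [AddMonoid α] [Preorder α] [AddLeftStrictMono α]
    {x : WithBot α} (hx : 0 < x) {m n : ℕ} (h : m < n) : m • x < n • x := by
  lift x to α using ne_bot_of_gt hx
  rw [← WithBot.coe_nsmul, ← WithBot.coe_nsmul, WithBot.coe_lt_coe]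
  exact nsmul_lt_nsmul_left (WithBot.coe_pos.1 hx) h

namespace IsPseudoDegree

variable {S : Type*} [Ring S] {χ : S → WithBot ℤ}

lemma map_zero (hχ : IsPseudoDegree χ) : χ 0 = ⊥ := (hχ.eq_bot_iff 0).2 rfl

lemma map_ne_bot (hχ : IsPseudoDegree χ) {x : S} (hx : x ≠ 0) : χ x ≠ ⊥ :=
  fun h => hx ((hχ.eq_bot_iff x).1 h)

lemma map_one [Nontrivial S] (hχ : IsPseudoDegree χ) : χ 1 = 0 := by
  have h := hχ.map_mul 1 1
  rw [one_mul] at h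
  lift χ 1 to ℤ using hχ.map_ne_bot one_ne_zero with n
  norm_cast at h ⊢
  omega

lemma map_neg [Nontrivial S] (hχ : IsPseudoDegree χ) (x : S) : χ (-x) = χ x := by
  have h := hχ.map_mul (-1) (-1)
  rw [neg_one_mul, neg_neg, hχ.map_one] at h
  have hneg_one : χ (-1) = 0 := by
    lift χ (-1) to ℤ using hχ.map_ne_bot (neg_ne_zero.2 one_ne_zero) with n
    norm_cast at h ⊢
    omega
  rw [← neg_one_mul, hχ.map_mul, hneg_one, zero_add]

lemma map_sub_le [Nontrivial S] (hχ : IsPseudoDegree χ) (x y : S) :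
    χ (x - y) ≤ max (χ x) (χ y) := by
  simpa only [sub_eq_add_neg, hχ.map_neg] using hχ.add_le x (-y)

lemma map_add_of_lt [Nontrivial S] (hχ : IsPseudoDegree χ) {x y : S} (h : χ y < χ x) :
    χ (x + y) = χ x := by
  refine le_antisymm ((hχ.add_le x y).trans (max_eq_left h.le).le) ?_
  have hx : χ x ≤ max (χ (x + y)) (χ y) := by simpa using hχ.map_sub_le (x + y) y
  exact (le_max_iff.1 hx).resolve_right h.not_ge

lemma map_sum_le (hχ : IsPseudoDegree χ) {ι : Type*} (s : Finset ι) (f : ι → S) :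
    χ (∑ i ∈ s, f i) ≤ s.sup fun i => χ (f i) := by
  classical
  induction s using Finset.induction_on with
  | empty => simp [hχ.map_zero]
  | insert i s hi ih =>
    rw [sum_insert hi, sup_insert]
    exact (hχ.add_le _ _).trans (max_le_max le_rfl ih)

lemma map_pow [Nontrivial S] (hχ : IsPseudoDegree χ) (x : S) (n : ℕ) : χ (x ^ n) = n • χ x := by
  induction n with
  | zero => simp [hχ.map_one]
  | succ n ih => rw [pow_succ, hχ.map_mul, ih, succ_nsmul]

section Algebra

variable {K : Type*} [Field K] [Algebra K S]

lemma map_algebraMap_eq_zero [Nontrivial S] (hχ : IsPseudoDegree χ)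
    (h : ∀ α : K, α ≠ 0 → 0 ≤ χ (algebraMap K S α)) {α : K} (hα : α ≠ 0) :
    χ (algebraMap K S α) = 0 := by
  have hsum : χ (algebraMap K S α) + χ (algebraMap K S α⁻¹) = 0 := by
    rw [← hχ.map_mul, ← _root_.map_mul, mul_inv_cancel₀ hα, _root_.map_one, hχ.map_one]
  exact ((add_eq_zero_iff_of_nonneg (h α hα) (h α⁻¹ (inv_ne_zero hα))).1 hsum).1

lemma map_smul (hχ : IsPseudoDegree χ) (hK : ∀ α : K, α ≠ 0 → χ (algebraMap K S α) = 0)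
    {α : K} (hα : α ≠ 0) (x : S) : χ (α • x) = χ x := by
  rw [Algebra.smul_def, hχ.map_mul, hK α hα, zero_add]

lemma map_smul_le (hχ : IsPseudoDegree χ) (hK : ∀ α : K, α ≠ 0 → χ (algebraMap K S α) = 0)
    (α : K) (x : S) : χ (α • x) ≤ χ x := by
  rcases eq_or_ne α 0 with rfl | hα
  · simp [hχ.map_zero]
  · exact (hχ.map_smul hK hα x).le

lemma map_sum_smul_pow_lt [Nontrivial S] (hχ : IsPseudoDegree χ)
    (hK : ∀ α : K, α ≠ 0 → χ (algebraMap K S α) = 0) {a : S} (ha : 0 < χ a) (c : ℕ → K)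
    (d : ℕ) : χ (∑ j ∈ range d, c j • a ^ j) < d • χ a := by
  have hd : ⊥ < d • χ a := bot_lt_iff_ne_bot.2 (WithBot.nsmul_ne_bot (ne_bot_of_gt ha) d)
  refine (hχ.map_sum_le _ _).trans_lt <| (Finset.sup_lt_iff hd).2 fun j hj => ?_
  calc χ (c j • a ^ j) ≤ χ (a ^ j) := hχ.map_smul_le hK _ _
    _ = j • χ a := hχ.map_pow a j
    _ < d • χ a := WithBot.nsmul_lt_nsmul_of_pos ha (mem_range.1 hj)

end Algebra

end IsPseudoDegree

lemma Polynomial.aeval_eq_leadingCoeff_smul_add {R A : Type*} [CommSemiring R] [Semiring A]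
    [Algebra R A] (a : A) (φ : R[X]) :
    aeval a φ = φ.leadingCoeff • a ^ φ.natDegree + ∑ j ∈ range φ.natDegree, φ.coeff j • a ^ j := by
  rw [aeval_eq_sum_range, sum_range_succ, add_comm]
  rfl

lemma IsPseudoDegree.map_aeval {K S : Type*} [Field K] [Ring S] [Algebra K S] [Nontrivial S]
    {χ : S → WithBot ℤ} (hχ : IsPseudoDegree χ)
    (hK : ∀ α : K, α ≠ 0 → χ (algebraMap K S α) = 0) {a : S} (ha : 0 < χ a) {φ : K[X]}
    (hφ : φ ≠ 0) : χ (aeval a φ) = φ.natDegree • χ a := by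
  have hlead : χ (φ.leadingCoeff • a ^ φ.natDegree) = φ.natDegree • χ a := by
    rw [hχ.map_smul hK (leadingCoeff_ne_zero.2 hφ), hχ.map_pow]
  rw [aeval_eq_leadingCoeff_smul_add,
    hχ.map_add_of_lt (hlead ▸ hχ.map_sum_smul_pow_lt hK ha _ _), hlead]

section PolyComb

variable {K S : Type*} [CommSemiring K] [Semiring S] [Algebra K S]

variable (K) in
noncomputable def polyComb (a : S) (b : ℕ → S) (k : ℕ) : (Fin k → K[X]) →ₗ[K] S where
  toFun φ := ∑ i, aeval a (φ i) * b i
  map_add' φ ψ := by simp only [Pi.add_apply, map_add, add_mul, sum_add_distrib]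
  map_smul' r φ := by
    simp only [Pi.smul_apply, map_smul, smul_mul_assoc, RingHom.id_apply, smul_sum]

variable {a : S} {b : ℕ → S}

@[simp]
lemma polyComb_apply {k : ℕ} (φ : Fin k → K[X]) :
    polyComb K a b k φ = ∑ i, aeval a (φ i) * b i :=
  rfl

lemma aeval_mul_mem_range_polyComb {i k : ℕ} (hi : i < k) (p : K[X]) :
    aeval a p * b i ∈ LinearMap.range (polyComb K a b k) :=
  ⟨Pi.single ⟨i, hi⟩ p, by simp [Pi.single_apply, apply_ite (aeval a), ite_mul]⟩

lemma range_polyComb_mono {k m : ℕ} (h : k ≤ m) :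
    LinearMap.range (polyComb K a b k) ≤ LinearMap.range (polyComb K a b m) := by
  rintro _ ⟨φ, rfl⟩
  rw [polyComb_apply]
  exact sum_mem fun i _ => aeval_mul_mem_range_polyComb (i.2.trans_le h) (φ i)

lemma range_polyComb_zero : LinearMap.range (polyComb K a b 0) = ⊥ := by
  ext c
  simp [eq_comm]

lemma range_polyComb_le {B : Subalgebra K S} (ha : a ∈ B) (hb : ∀ i, b i ∈ B) (k : ℕ) :
    LinearMap.range (polyComb K a b k) ≤ Subalgebra.toSubmodule B := by
  rintro _ ⟨φ, rfl⟩
  have haeval (p : K[X]) : aeval a p ∈ B :=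
    Algebra.adjoin_le (Set.singleton_subset_iff.2 ha) (aeval_mem_adjoin_singleton K a)
  rw [polyComb_apply, Subalgebra.mem_toSubmodule]
  exact sum_mem fun i _ => B.mul_mem (haeval (φ i)) (hb i)

end PolyComb

lemma IsPseudoDegree.map_polyComb_sub_sum_leading_lt {K S : Type*} [Field K] [Ring S]
    [Algebra K S] [Nontrivial S] {χ : S → WithBot ℤ} (hχ : IsPseudoDegree χ)
    (hK : ∀ α : K, α ≠ 0 → χ (algebraMap K S α) = 0) {a : S} (ha : 0 < χ a) {b : ℕ → S}
    (hb : ∀ i, χ (b i) ≠ ⊥) {k : ℕ} (φ : Fin k → K[X]) {M : WithBot ℤ} (hM : M ≠ ⊥)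
    (hle : ∀ i, χ (aeval a (φ i)) + χ (b i) ≤ M) :
    χ (polyComb K a b k φ - ∑ i ∈ univ.filter (fun i => χ (aeval a (φ i)) + χ (b i) = M),
      (φ i).leadingCoeff • (a ^ (φ i).natDegree * b i)) < M := by
  set T := univ.filter fun i => χ (aeval a (φ i)) + χ (b i) = M
  have hsplit : polyComb K a b k φ - ∑ i ∈ T, (φ i).leadingCoeff • (a ^ (φ i).natDegree * b i)
      = ∑ i ∈ T, (∑ j ∈ range (φ i).natDegree, (φ i).coeff j • a ^ j) * b i
        + ∑ i ∈ univ.filter (fun i => χ (aeval a (φ i)) + χ (b i) ≠ M), aeval a (φ i) * b i := by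
    rw [polyComb_apply, ← sum_filter_add_sum_filter_not univ
      (fun i => χ (aeval a (φ i)) + χ (b i) = M), add_sub_right_comm, ← sum_sub_distrib]
    congr 1
    refine sum_congr rfl fun i _ => ?_
    rw [aeval_eq_leadingCoeff_smul_add, add_mul, smul_mul_assoc, add_sub_cancel_left]
  have hM' : ⊥ < M := bot_lt_iff_ne_bot.2 hM
  rw [hsplit]
  refine (hχ.add_le _ _).trans_lt (max_lt ?_ ?_) <;>
    refine (hχ.map_sum_le _ _).trans_lt ((Finset.sup_lt_iff hM').2 fun i hi => ?_) <;>
    rw [hχ.map_mul]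
  · have hiM := (mem_filter.1 hi).2
    have hφ : φ i ≠ 0 := by
      rintro h
      rw [h, _root_.map_zero, hχ.map_zero, WithBot.bot_add] at hiM
      exact hM hiM.symm
    rw [← hiM, hχ.map_aeval hK ha hφ]
    exact WithBot.add_lt_add_right (hb i) (hχ.map_sum_smul_pow_lt hK ha _ _)
  · exact lt_of_le_of_ne (hle i) (mem_filter.1 hi).2

section MinimalDegreeSequence

variable {K S : Type*} [Field K] [Ring S] [Algebra K S]

/-- The sequence of the paper: `b t` has minimal `χ` among the elements of `B` outside the
`K[a]`-span `LinearMap.range (polyComb K a b t)` of `b 0, …, b (t - 1)`. -/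
structure IsMinimalDegreeSequence (χ : S → WithBot ℤ) (B : Subalgebra K S) (a : S)
    (b : ℕ → S) : Prop where
  a_mem : a ∈ B
  mem : ∀ i, b i ∈ B
  notMem_range : ∀ t, b t ∉ LinearMap.range (polyComb K a b t)
  le_of_notMem_range : ∀ t, ∀ c ∈ B, c ∉ LinearMap.range (polyComb K a b t) → χ (b t) ≤ χ c

namespace IsMinimalDegreeSequence

variable {χ : S → WithBot ℤ} {B : Subalgebra K S} {a : S} {b : ℕ → S}

lemma ne_zero (h : IsMinimalDegreeSequence χ B a b) (t : ℕ) : b t ≠ 0 :=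
  fun h0 => h.notMem_range t (h0 ▸ zero_mem _)

lemma monotone (h : IsMinimalDegreeSequence χ B a b) : Monotone fun i => χ (b i) :=
  fun i j hij => h.le_of_notMem_range i (b j) (h.mem j)
    fun hj => h.notMem_range j (range_polyComb_mono hij hj)

lemma map_le_map_smul_add (h : IsMinimalDegreeSequence χ B a b) {t : ℕ} {α : K} (hα : α ≠ 0)
    {r : S} (hr : r ∈ LinearMap.range (polyComb K a b t)) : χ (b t) ≤ χ (α • b t + r) := by
  refine h.le_of_notMem_range t _
    (B.add_mem (B.smul_mem (h.mem t) α) (range_polyComb_le h.a_mem h.mem t hr)) fun hc => ?_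
  apply h.notMem_range t
  have hbt : b t = α⁻¹ • (α • b t + r - r) := by
    rw [add_sub_cancel_right, smul_smul, inv_mul_cancel₀ hα, one_smul]
  rw [hbt]
  exact Submodule.smul_mem _ _ (Submodule.sub_mem _ hc hr)

lemma map_le_map_sum_smul (h : IsMinimalDegreeSequence χ B a b) {k : ℕ} {T : Finset (Fin k)}
    {t : Fin k} (htT : t ∈ T) (htmax : ∀ i ∈ T, i ≤ t) (c : Fin k → K) (hc : c t ≠ 0)
    (e : Fin k → ℕ) (he : e t = 0) : χ (b t) ≤ χ (∑ i ∈ T, c i • (a ^ e i * b i)) := by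
  rw [← add_sum_erase T _ htT, he, pow_zero, one_mul]
  refine h.map_le_map_smul_add hc (sum_mem fun i hi => Submodule.smul_mem _ _ ?_)
  have hit : (i : ℕ) < t :=
    lt_of_le_of_ne (htmax i (mem_of_mem_erase hi)) (Fin.val_ne_of_ne (ne_of_mem_erase hi))
  simpa using aeval_mul_mem_range_polyComb (a := a) (b := b) hit (X ^ e i)

lemma le_map_sum_leading [Nontrivial S] (h : IsMinimalDegreeSequence χ B a b)
    (hχ : IsPseudoDegree χ) (hK : ∀ α : K, α ≠ 0 → χ (algebraMap K S α) = 0) (ha : 0 < χ a)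
    {k : ℕ}
    (φ : Fin k → K[X]) {T : Finset (Fin k)} {t : Fin k} (htT : t ∈ T) (htmax : ∀ i ∈ T, i ≤ t)
    {M : WithBot ℤ} (hM : M ≠ ⊥) (hval : ∀ i ∈ T, χ (aeval a (φ i)) + χ (b i) = M) :
    M ≤ χ (∑ i ∈ T, (φ i).leadingCoeff • (a ^ (φ i).natDegree * b i)) := by
  have hφ (i : Fin k) (hi : i ∈ T) : φ i ≠ 0 := by
    rintro h0
    have hiM := hval i hi
    rw [h0, _root_.map_zero, hχ.map_zero, WithBot.bot_add] at hiM
    exact hM hiM.symm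
  have hval' (i : Fin k) (hi : i ∈ T) : (φ i).natDegree • χ a + χ (b i) = M := by
    rw [← hχ.map_aeval hK ha (hφ i hi), hval i hi]
  have hdeg (i : Fin k) (hi : i ∈ T) : (φ t).natDegree ≤ (φ i).natDegree := by
    by_contra! hlt
    refine (lt_irrefl M ?_).elim
    calc M = (φ i).natDegree • χ a + χ (b i) := (hval' i hi).symm
      _ ≤ (φ i).natDegree • χ a + χ (b t) := add_le_add le_rfl (h.monotone (htmax i hi))
      _ < (φ t).natDegree • χ a + χ (b t) :=
        WithBot.add_lt_add_right (hχ.map_ne_bot (h.ne_zero t))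
          (WithBot.nsmul_lt_nsmul_of_pos ha hlt)
      _ = M := hval' t htT
  have hfactor : ∑ i ∈ T, (φ i).leadingCoeff • (a ^ (φ i).natDegree * b i)
      = a ^ (φ t).natDegree *
        ∑ i ∈ T, (φ i).leadingCoeff • (a ^ ((φ i).natDegree - (φ t).natDegree) * b i) := by
    rw [mul_sum]
    refine sum_congr rfl fun i hi => ?_
    rw [mul_smul_comm, ← mul_assoc, ← pow_add, Nat.add_sub_cancel' (hdeg i hi)]
  rw [hfactor, hχ.map_mul, hχ.map_pow, ← hval' t htT,
    WithBot.add_le_add_iff_left (WithBot.nsmul_ne_bot (ne_bot_of_gt ha) _)]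
  exact h.map_le_map_sum_smul htT htmax (fun i => (φ i).leadingCoeff)
    (leadingCoeff_ne_zero.2 (hφ t htT)) (fun i => (φ i).natDegree - (φ t).natDegree)
    (Nat.sub_self _)

theorem map_polyComb_eq_sup [Nontrivial S] (h : IsMinimalDegreeSequence χ B a b)
    (hχ : IsPseudoDegree χ) (hK : ∀ α : K, α ≠ 0 → χ (algebraMap K S α) = 0) (ha : 0 < χ a)
    {k : ℕ}
    (φ : Fin k → K[X]) :
    χ (polyComb K a b k φ) = univ.sup fun i => χ (aeval a (φ i)) + χ (b i) := by
  set M := univ.sup fun i => χ (aeval a (φ i)) + χ (b i)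
  set P := polyComb K a b k φ
  refine le_antisymm ?_ (not_lt.1 fun hlt => ?_)
  · calc χ P ≤ univ.sup fun i => χ (aeval a (φ i) * b i) :=
        hχ.map_sum_le univ fun i => aeval a (φ i) * b i
      _ = M := by simp only [hχ.map_mul, M]
  have hM : M ≠ ⊥ := ne_bot_of_gt hlt
  set T := univ.filter fun i => χ (aeval a (φ i)) + χ (b i) = M
  have hTne : T.Nonempty := by
    rcases isEmpty_or_nonempty (Fin k) with _ | _
    · exact absurd (by simp [M]) hM
    · obtain ⟨i, -, hi⟩ := exists_mem_eq_sup univ univ_nonempty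
        fun i => χ (aeval a (φ i)) + χ (b i)
      exact ⟨i, mem_filter.2 ⟨mem_univ i, hi.symm⟩⟩
  set L := ∑ i ∈ T, (φ i).leadingCoeff • (a ^ (φ i).natDegree * b i)
  have hL : M ≤ χ L := h.le_map_sum_leading hχ hK ha φ (T.max'_mem hTne)
    (fun i hi => T.le_max' i hi) hM fun i hi => (mem_filter.1 hi).2
  refine (lt_irrefl M (hL.trans_lt ?_)).elim
  calc χ L = χ (P - (P - L)) := by rw [sub_sub_cancel]
    _ ≤ max (χ P) (χ (P - L)) := hχ.map_sub_le _ _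
    _ < M := max_lt hlt (hχ.map_polyComb_sub_sum_leading_lt hK ha
        (fun i => hχ.map_ne_bot (h.ne_zero i)) φ hM
        fun i => le_sup (f := fun i => χ (aeval a (φ i)) + χ (b i)) (mem_univ i))

end IsMinimalDegreeSequence

end MinimalDegreeSequence

theorem stmt5_general {K S : Type*} [Field K] [Ring S] [Algebra K S]
    (χ : S → WithBot ℤ) (hχ : IsPseudoDegree χ)
    (a : S) (ha : 0 < χ a) (ℓ : ℕ)
    (hD : CondD χ (Subalgebra.centralizer K {a}) ℓ)
    (b : ℕ → S) (hb1 : b 0 = 1)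
    (hbC : ∀ k : ℕ, b k ∈ Subalgebra.centralizer K {a})
    (hnot : ∀ k : ℕ, ¬ ∃ φ : Fin (k + 1) → Polynomial K,
      b (k + 1) = ∑ i, Polynomial.aeval a (φ i) * b i.val)
    (hmin : ∀ k : ℕ, ∀ c ∈ Subalgebra.centralizer K {a},
      (¬ ∃ φ : Fin (k + 1) → Polynomial K,
        c = ∑ i, Polynomial.aeval a (φ i) * b i.val) →
      χ (b (k + 1)) ≤ χ c) :
    ∀ k : ℕ, ∀ φ : Fin k → Polynomial K,
      χ (∑ i, Polynomial.aeval a (φ i) * b i.val)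
        = Finset.univ.sup (fun i => χ (Polynomial.aeval a (φ i)) + χ (b i.val)) := by
  have : Nontrivial S := ⟨a, 0, fun h0 => by simp [h0, hχ.map_zero] at ha⟩
  have hK (α : K) (hα : α ≠ 0) : χ (algebraMap K S α) = 0 :=
    hχ.map_algebraMap_eq_zero (fun β hβ => hD.1 _ (Subalgebra.algebraMap_mem _ β)
      ((_root_.map_ne_zero _).2 hβ)) hα
  have hseq : IsMinimalDegreeSequence χ (Subalgebra.centralizer K {a}) a b :=
    { a_mem := (Subalgebra.mem_centralizer_iff K).2 fun g hg => by
        rw [Set.mem_singleton_iff.1 hg]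
      mem := hbC
      notMem_range := by
        rintro (_ | k)
        · simp [range_polyComb_zero, hb1]
        · exact fun ⟨φ, hφ⟩ => hnot k ⟨φ, hφ.symm⟩
      le_of_notMem_range := by
        rintro (_ | k) c hc hcn
        · rw [hb1, hχ.map_one]
          exact hD.1 c hc (by simpa [range_polyComb_zero] using hcn)
        · exact hmin k c hc fun ⟨φ, hφ⟩ => hcn ⟨φ, hφ.symm⟩ }
  exact fun k φ => hseq.map_polyComb_eq_sup hχ hK ha φ

theorem stmt5 {K S : Type*} [Field K] [Ring S] [Algebra K S]
    (χ : S → WithBot ℤ) (hχ : IsPseudoDegree χ)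
    (a : S) (ha : 0 < χ a) (ℓ : ℕ) (hℓ : 0 < ℓ)
    (hD : CondD χ (Subalgebra.centralizer K {a}) ℓ)
    (b : ℕ → S) (hb1 : b 0 = 1)
    (hbC : ∀ k : ℕ, b k ∈ Subalgebra.centralizer K {a})
    (hnot : ∀ k : ℕ, ¬ ∃ φ : Fin (k + 1) → Polynomial K,
      b (k + 1) = ∑ i, Polynomial.aeval a (φ i) * b i.val)
    (hmin : ∀ k : ℕ, ∀ c ∈ Subalgebra.centralizer K {a},
      (¬ ∃ φ : Fin (k + 1) → Polynomial K,
        c = ∑ i, Polynomial.aeval a (φ i) * b i.val) →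
      χ (b (k + 1)) ≤ χ c) :
    ∀ k : ℕ, ∀ φ : Fin k → Polynomial K,
      χ (∑ i, Polynomial.aeval a (φ i) * b i.val)
        = Finset.univ.sup (fun i => χ (Polynomial.aeval a (φ i)) + χ (b i.val)) :=
  stmt5_general χ hχ a ha ℓ hD b hb1 hbC hnot hmin
end

section
/- Let S be a K-algebra with a pseudo-degree function χ and let a ∈ S with χ(a) = m > 0 be such that C_S(a) satisfies condition D(1). Then C_S(a) has a finite basis as a K[a]-module whose cardinality divides m. -/
open Polynomial

namespace IsPseudoDegree

variable {S : Type*} [Ring S] {χ : S → WithBot ℤ} (hχ : IsPseudoDegree χ)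
include hχ

lemma chi_zero : χ 0 = ⊥ := (hχ.eq_bot_iff 0).2 rfl

lemma ne_bot_iff {x : S} : χ x ≠ ⊥ ↔ x ≠ 0 := not_iff_not.2 (hχ.eq_bot_iff x)

lemma mul_ne_zero' {x y : S} (hx : x ≠ 0) (hy : y ≠ 0) : x * y ≠ 0 := by
  rw [← hχ.ne_bot_iff] at hx hy ⊢
  rw [hχ.map_mul]
  exact WithBot.add_ne_bot.2 ⟨hx, hy⟩

lemma chi_one (h : (1 : S) ≠ 0) : χ 1 = 0 := by
  have h2 := hχ.map_mul 1 1
  rw [one_mul] at h2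
  obtain ⟨z, hz⟩ := WithBot.ne_bot_iff_exists.1 (hχ.ne_bot_iff.2 h)
  rw [← hz, ← WithBot.coe_add, WithBot.coe_inj] at h2
  rw [← hz]
  norm_cast
  omega

lemma chi_neg (x : S) : χ (-x) = χ x := by
  by_cases hx : x = 0
  · simp [hx]
  have h1 : (1 : S) ≠ 0 := by
    intro h; exact hx (by rw [← one_mul x, h, zero_mul])
  have hm1 : χ (-1 : S) = 0 := by
    have hne : (-1 : S) ≠ 0 := by
      intro h
      exact h1 (by rw [← neg_neg (1 : S), h, neg_zero])
    have h2 := hχ.map_mul (-1 : S) (-1)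
    rw [neg_one_mul, neg_neg, hχ.chi_one h1] at h2
    obtain ⟨z, hz⟩ := WithBot.ne_bot_iff_exists.1 (hχ.ne_bot_iff.2 hne)
    rw [← hz, ← WithBot.coe_add] at h2
    rw [← hz]
    norm_cast at h2 ⊢
    omega
  calc χ (-x) = χ ((-1) * x) := by rw [neg_one_mul]
  _ = χ (-1 : S) + χ x := hχ.map_mul _ _
  _ = χ x := by rw [hm1, zero_add]

lemma chi_add_eq_left {x y : S} (h : χ y < χ x) : χ (x + y) = χ x := by
  refine le_antisymm (le_trans (hχ.add_le x y) (by rw [max_eq_left h.le])) ?_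
  by_contra hc
  push_neg at hc
  have h2 : χ x ≤ max (χ (x + y)) (χ (-y)) := by
    have := hχ.add_le (x + y) (-y)
    rwa [add_neg_cancel_right] at this
  rw [hχ.chi_neg] at h2
  rcases max_cases (χ (x + y)) (χ y) with ⟨he, _⟩ | ⟨he, _⟩ <;> rw [he] at h2
  · exact absurd (lt_of_le_of_lt h2 hc) (lt_irrefl _)
  · exact absurd (lt_of_le_of_lt h2 h) (lt_irrefl _)

lemma chi_add_eq_of_ne {x y : S} (h : χ x ≠ χ y) : χ (x + y) = max (χ x) (χ y) := by
  rcases lt_or_gt_of_ne h with h' | h'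
  · rw [add_comm, hχ.chi_add_eq_left h', max_eq_right h'.le]
  · rw [hχ.chi_add_eq_left h', max_eq_left h'.le]

lemma chi_sum {ι : Type*} (s : Finset ι) (f : ι → S)
    (hd : ∀ i ∈ s, ∀ j ∈ s, i ≠ j → χ (f i) = χ (f j) → χ (f i) = ⊥) :
    χ (∑ i ∈ s, f i) = s.sup fun i => χ (f i) := by
  classical
  induction s using Finset.induction with
  | empty => simpa using hχ.chi_zero
  | @insert i s hni ih =>
    rw [Finset.sum_insert hni, Finset.sup_insert]
    have ihs : χ (∑ j ∈ s, f j) = s.sup fun j => χ (f j) :=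
      ih fun i hi j hj => hd i (Finset.mem_insert_of_mem hi) j (Finset.mem_insert_of_mem hj)
    by_cases he : χ (f i) = χ (∑ j ∈ s, f j)
    · -- equal case: must be ⊥
      have hbot : χ (f i) = ⊥ := by
        by_contra hb
        have hsne : (s.sup fun j => χ (f j)) ≠ ⊥ := by rw [← ihs, ← he]; exact hb
        have hne : s.Nonempty := by
          by_contra hemp
          rw [Finset.not_nonempty_iff_eq_empty] at hemp
          simp [hemp] at hsne
        obtain ⟨j, hj, hjs⟩ := Finset.exists_mem_eq_sup s hne fun j => χ (f j)
        have : χ (f i) = χ (f j) := by rw [he, ihs, hjs]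
        exact hb (hd i (Finset.mem_insert_self i s) j (Finset.mem_insert_of_mem hj)
          (fun h => hni (h ▸ hj)) this)
      have hx : f i = 0 := (hχ.eq_bot_iff _).1 hbot
      have hy : (∑ j ∈ s, f j) = 0 := (hχ.eq_bot_iff _).1 (by rw [← he]; exact hbot)
      rw [hx, zero_add, ihs, hχ.chi_zero, bot_sup_eq]
    · rw [hχ.chi_add_eq_of_ne he, ihs]

lemma chi_pow {x : S} {z : ℤ} (hx : χ x = (z : WithBot ℤ)) (n : ℕ) :
    χ (x ^ n) = ((n * z : ℤ) : WithBot ℤ) := by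
  have h1 : (1 : S) ≠ 0 := by
    intro h
    have : x = 0 := by rw [← one_mul x, h, zero_mul]
    rw [this, hχ.chi_zero] at hx
    exact absurd hx.symm WithBot.coe_ne_bot
  induction n with
  | zero => simpa using hχ.chi_one h1
  | succ n ih =>
    rw [pow_succ, hχ.map_mul, ih, hx, ← WithBot.coe_add]
    congr 1
    push_cast
    ring

end IsPseudoDegree

section AlgAux

variable {K S : Type*} [Field K] [Ring S] [Algebra K S]
variable {χ : S → WithBot ℤ} (hχ : IsPseudoDegree χ)
include hχ

lemma chi_algebraMap_eq_zero (h1 : (1 : S) ≠ 0)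
    (B : Subalgebra K S) (hB : ∀ b ∈ B, b ≠ 0 → 0 ≤ χ b)
    {α : K} (hα : α ≠ 0) : χ (algebraMap K S α) = 0 := by
  set u := algebraMap K S α with hu
  set v := algebraMap K S α⁻¹ with hv
  have huv : u * v = 1 := by
    rw [hu, hv, ← map_mul, mul_inv_cancel₀ hα, map_one]
  have hu0 : u ≠ 0 := by
    intro h; rw [h, zero_mul] at huv; exact h1 huv.symm
  have hv0 : v ≠ 0 := by
    intro h; rw [h, mul_zero] at huv; exact h1 huv.symm
  have hsum : χ u + χ v = 0 := by
    rw [← hχ.map_mul, huv, hχ.chi_one h1]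
  have hup : 0 ≤ χ u := hB u (B.algebraMap_mem α) hu0
  have hvp : 0 ≤ χ v := hB v (B.algebraMap_mem α⁻¹) hv0
  obtain ⟨zu, hzu⟩ := WithBot.ne_bot_iff_exists.1 (hχ.ne_bot_iff.2 hu0)
  obtain ⟨zv, hzv⟩ := WithBot.ne_bot_iff_exists.1 (hχ.ne_bot_iff.2 hv0)
  rw [← hzu, ← hzv, ← WithBot.coe_add] at hsum
  rw [← hzu] at hup ⊢
  rw [← hzv] at hvp
  norm_cast at hsum hup hvp ⊢
  omega

lemma chi_smul (h1 : (1 : S) ≠ 0)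
    (B : Subalgebra K S) (hB : ∀ b ∈ B, b ≠ 0 → 0 ≤ χ b)
    {α : K} (hα : α ≠ 0) (x : S) : χ (α • x) = χ x := by
  rw [Algebra.smul_def, hχ.map_mul, chi_algebraMap_eq_zero hχ h1 B hB hα, zero_add]

lemma chi_aeval (h1 : (1 : S) ≠ 0)
    (B : Subalgebra K S) (hB : ∀ b ∈ B, b ≠ 0 → 0 ≤ χ b)
    {a : S} {m : ℕ} (hχa : χ a = ((m : ℤ) : WithBot ℤ)) (hm : 0 < m)
    {p : K[X]} (hp : p ≠ 0) :
    χ (aeval a p) = (((m * p.natDegree : ℕ) : ℤ) : WithBot ℤ) := by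
  classical
  rw [aeval_eq_sum_range]
  set f : ℕ → S := fun i => p.coeff i • a ^ i with hf
  have hterm : ∀ i, p.coeff i ≠ 0 → χ (f i) = (((i * m : ℕ) : ℤ) : WithBot ℤ) := by
    intro i hi
    rw [hf]
    simp only []
    rw [Algebra.smul_def, hχ.map_mul, chi_algebraMap_eq_zero hχ h1 B hB hi, zero_add,
      hχ.chi_pow hχa i]
    norm_cast
  have hbotterm : ∀ i, p.coeff i = 0 → χ (f i) = ⊥ := by
    intro i hi
    rw [hf]; simp only []
    rw [hi, zero_smul, hχ.chi_zero]
  have hdist : ∀ i ∈ Finset.range (p.natDegree + 1), ∀ j ∈ Finset.range (p.natDegree + 1),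
      i ≠ j → χ (f i) = χ (f j) → χ (f i) = ⊥ := by
    intro i _ j _ hij heq
    by_cases hi : p.coeff i = 0
    · exact hbotterm i hi
    by_cases hj : p.coeff j = 0
    · rw [heq]; exact hbotterm j hj
    exfalso
    rw [hterm i hi, hterm j hj] at heq
    have : i * m = j * m := by exact_mod_cast heq
    exact hij (Nat.eq_of_mul_eq_mul_right hm this)
  rw [hχ.chi_sum _ _ hdist]
  apply le_antisymm
  · apply Finset.sup_le
    intro i hi
    by_cases hci : p.coeff i = 0
    · rw [hbotterm i hci]; exact bot_le
    · rw [hterm i hci]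
      have h2 : i * m ≤ m * p.natDegree := by
        have : i ≤ p.natDegree := le_natDegree_of_ne_zero hci
        calc i * m ≤ p.natDegree * m := Nat.mul_le_mul_right m this
        _ = m * p.natDegree := Nat.mul_comm _ _
      exact_mod_cast h2
  · have hd : p.coeff p.natDegree ≠ 0 := by
      intro h
      exact hp (Polynomial.leadingCoeff_eq_zero.1 h)
    have h3 : (fun i => χ (f i)) p.natDegree ≤ (Finset.range (p.natDegree + 1)).sup fun i => χ (f i) :=
      Finset.le_sup (f := fun i => χ (f i)) (Finset.mem_range.2 (Nat.lt_succ_self _))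
    simp only [] at h3
    rw [hterm _ hd] at h3
    rw [Nat.mul_comm]
    exact h3

end AlgAux


theorem stmt8 {K S : Type*} [Field K] [Ring S] [Algebra K S]
    (χ : S → WithBot ℤ) (hχ : IsPseudoDegree χ)
    (a : S) (m : ℕ) (hm : 0 < m) (hχa : χ a = ((m : ℤ) : WithBot ℤ))
    (hD : CondD χ (Subalgebra.centralizer K {a}) 1) :
    ∃ k : ℕ, k ∣ m ∧ ∃ b : Fin k → S,
      (∀ i, b i ∈ Subalgebra.centralizer K {a}) ∧
      (∀ c ∈ Subalgebra.centralizer K {a}, ∃ φ : Fin k → Polynomial K,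
        c = ∑ i, Polynomial.aeval a (φ i) * b i) ∧
      (∀ φ : Fin k → Polynomial K,
        ∑ i, Polynomial.aeval a (φ i) * b i = 0 → ∀ i, φ i = 0) := by
  classical
  set C := Subalgebra.centralizer K {a} with hC
  have haC : a ∈ C := (Subalgebra.mem_centralizer_iff (R := K)).2 (fun g hg => by
    rw [Set.mem_singleton_iff] at hg; rw [hg])
  have ha0 : a ≠ 0 := hχ.ne_bot_iff.1 (by rw [hχa]; exact WithBot.coe_ne_bot)
  have h1 : (1 : S) ≠ 0 := fun h => ha0 (by rw [← one_mul a, h, zero_mul])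
  haveI : NeZero m := ⟨hm.ne'⟩
  have hB := hD.1
  -- nonzero elements of C have natural χ-values
  have natval : ∀ c ∈ C, c ≠ 0 → ∃ n : ℕ, χ c = ((n : ℤ) : WithBot ℤ) := by
    intro c hc hc0
    obtain ⟨z, hz⟩ := WithBot.ne_bot_iff_exists.1 (hχ.ne_bot_iff.2 hc0)
    have h0 : (0 : WithBot ℤ) ≤ (z : WithBot ℤ) := by rw [hz]; exact hB c hc hc0
    have hz0 : 0 ≤ z := by exact_mod_cast h0
    exact ⟨z.toNat, by rw [← hz, Int.toNat_of_nonneg hz0]⟩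
  -- the value set, as a predicate
  set P : ZMod m → ℕ → Prop :=
    fun ρ n => (∃ c ∈ C, c ≠ 0 ∧ χ c = ((n : ℤ) : WithBot ℤ)) ∧ (n : ZMod m) = ρ with hP
  -- the residue group
  set R : AddSubgroup (ZMod m) :=
    { carrier := {ρ | ∃ n, P ρ n}
      zero_mem' := ⟨0, ⟨⟨1, one_mem C, h1, by simpa using hχ.chi_one h1⟩, by simp⟩⟩
      add_mem' := by
        rintro ρ σ ⟨n, ⟨⟨c, hc, hc0, hcχ⟩, hn⟩⟩ ⟨n', ⟨⟨c', hc', hc'0, hc'χ⟩, hn'⟩⟩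
        refine ⟨n + n', ⟨⟨c * c', mul_mem hc hc', hχ.mul_ne_zero' hc0 hc'0, ?_⟩, by
          push_cast; rw [hn, hn']⟩⟩
        rw [hχ.map_mul, hcχ, hc'χ, ← WithBot.coe_add]
        norm_cast
      neg_mem' := by
        rintro ρ ⟨n, ⟨⟨c, hc, hc0, hcχ⟩, hn⟩⟩
        refine ⟨n * (m - 1), ⟨⟨c ^ (m - 1), pow_mem hc _, ?_, ?_⟩, ?_⟩⟩
        · exact hχ.ne_bot_iff.1 (by rw [hχ.chi_pow hcχ]; exact WithBot.coe_ne_bot)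
        · rw [hχ.chi_pow hcχ]; norm_cast; ring
        · have hcast : ((n * (m - 1) : ℕ) : ZMod m) = (n : ZMod m) * ((m : ZMod m) - 1) := by
            have h1m : (1 : ℕ) ≤ m := hm
            push_cast [Nat.cast_sub h1m]
            ring
          rw [hcast, ZMod.natCast_self, hn]
          ring } with hR
  have hRmem : ∀ ρ : ZMod m, ρ ∈ R ↔ ∃ n, P ρ n := fun ρ => Iff.rfl
  set k := Nat.card R with hk
  have hkdvd : k ∣ m := by
    have h := AddSubgroup.card_addSubgroup_dvd_card R
    rwa [Nat.card_zmod] at h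
  set e : Fin k ≃ R := (Finite.equivFin R).symm with he
  -- minimal value in each residue class
  have hex : ∀ ρ : R, ∃ n, P (ρ : ZMod m) n := fun ρ => (hRmem ρ).1 ρ.2
  set N : R → ℕ := fun ρ => Nat.find (hex ρ) with hN
  have hNspec : ∀ ρ : R, P (ρ : ZMod m) (N ρ) := fun ρ => Nat.find_spec (hex ρ)
  have hNmin : ∀ ρ : R, ∀ n < N ρ, ¬ P (ρ : ZMod m) n := fun ρ => fun n h => Nat.find_min (hex ρ) h
  have hNcast : ∀ ρ : R, ((N ρ : ZMod m)) = (ρ : ZMod m) := fun ρ => (hNspec ρ).2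
  -- choose representatives
  have hbex : ∀ ρ : R, ∃ c, c ∈ C ∧ c ≠ 0 ∧ χ c = ((N ρ : ℤ) : WithBot ℤ) := by
    intro ρ
    obtain ⟨c, hc, hc0, hcχ⟩ := (hNspec ρ).1
    exact ⟨c, hc, hc0, hcχ⟩
  choose bb hbC hb0 hbχ using hbex
  set b : Fin k → S := fun i => bb (e i) with hb
  refine ⟨k, hkdvd, b, fun i => hbC (e i), ?_, ?_⟩
  · -- spanning
    have key : ∀ M : ℕ, ∀ c ∈ C, χ c < ((M : ℤ) : WithBot ℤ) →
        ∃ φ : Fin k → Polynomial K, c = ∑ i, Polynomial.aeval a (φ i) * b i := by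
      intro M
      induction M using Nat.strong_induction_on with
      | _ M IH =>
      intro c hcC hclt
      by_cases hc0 : c = 0
      · exact ⟨0, by simp [hc0]⟩
      obtain ⟨n, hn⟩ := natval c hcC hc0
      have hnM : n < M := by
        rw [hn] at hclt
        exact_mod_cast hclt
      set ρ : R := ⟨(n : ZMod m), (hRmem _).2 ⟨n, ⟨⟨c, hcC, hc0, hn⟩, rfl⟩⟩⟩ with hρ
      have hge : N ρ ≤ n := by
        by_contra hlt
        push_neg at hlt
        exact hNmin ρ n hlt ⟨⟨c, hcC, hc0, hn⟩, rfl⟩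
      obtain ⟨t, ht⟩ : ∃ t, n = N ρ + t * m := by
        have hmod : (N ρ : ZMod m) = (n : ZMod m) := hNcast ρ
        have := (ZMod.natCast_eq_natCast_iff _ _ _).1 hmod
        obtain ⟨t, ht⟩ := (Nat.modEq_iff_dvd' hge).1 this
        exact ⟨t, by rw [Nat.mul_comm]; omega⟩
      set d := a ^ t * bb ρ with hd
      have hdC : d ∈ C := mul_mem (pow_mem haC t) (hbC ρ)
      have hχd : χ d = ((n : ℤ) : WithBot ℤ) := by
        rw [hd, hχ.map_mul, hχ.chi_pow hχa t, hbχ ρ, ← WithBot.coe_add]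
        congr 1
        have hcast : (n : ℤ) = (N ρ : ℤ) + (t : ℤ) * (m : ℤ) := by exact_mod_cast congrArg (Nat.cast : ℕ → ℤ) ht
        linarith
      obtain ⟨α, hα, hαlt⟩ := hD.2 ![c, d]
        (by intro i; fin_cases i <;> simpa using ‹_›)
        (by intro i; fin_cases i <;> simp [hχd, hn])
        (by simp [hn])
      simp only [Matrix.cons_val_zero] at hαlt
      have hsum2 : (∑ i, α i • ![c, d] i) = α 0 • c + α 1 • d := by
        rw [Fin.sum_univ_two]; simp
      have hα0 : α 0 ≠ 0 := by
        intro h0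
        have hα1 : α 1 ≠ 0 := by
          intro h1'
          apply hα
          funext i
          fin_cases i <;> simp [h0, h1']
        rw [hsum2, h0, zero_smul, zero_add,
          chi_smul hχ h1 C hB hα1 d, hχd, ← hn] at hαlt
        exact absurd hαlt (lt_irrefl _)
      set γ : K := -((α 0)⁻¹ * α 1) with hγ
      set c'' := ∑ i, α i • ![c, d] i with hc''
      have hc''C : c'' ∈ C := by
        rw [hsum2]
        exact add_mem (SMulMemClass.smul_mem _ hcC) (SMulMemClass.smul_mem _ hdC)
      have hcc : c = (α 0)⁻¹ • c'' + γ • d := by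
        rw [hsum2, smul_add, smul_smul, smul_smul, inv_mul_cancel₀ hα0, one_smul, hγ,
          neg_smul, add_assoc, add_neg_cancel, add_zero]
      have hχsmul : χ ((α 0)⁻¹ • c'') < ((n : ℤ) : WithBot ℤ) := by
        rw [chi_smul hχ h1 C hB (inv_ne_zero hα0), ← hn]
        exact hαlt
      obtain ⟨ψ, hψ⟩ := IH n hnM ((α 0)⁻¹ • c'') (SMulMemClass.smul_mem _ hc''C) hχsmul
      set i0 := e.symm ρ with hi0
      refine ⟨fun i => ψ i + if i = i0 then (Polynomial.C γ) * X ^ t else 0, ?_⟩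
      have hterm : ∀ i : Fin k, Polynomial.aeval a (ψ i + if i = i0 then (Polynomial.C γ) * X ^ t else 0) * b i
          = Polynomial.aeval a (ψ i) * b i + (if i = i0 then γ • d else 0) := by
        intro i
        rw [map_add, add_mul]
        congr 1
        by_cases hii : i = i0
        · subst hii
          rw [if_pos rfl, if_pos rfl, map_mul, aeval_C, aeval_X_pow]
          show (algebraMap K S γ * a ^ t) * bb (e i0) = γ • d
          rw [hi0, Equiv.apply_symm_apply, ← Algebra.smul_def, smul_mul_assoc, ← hd]
        · simp [hii]
      calc c = (α 0)⁻¹ • c'' + γ • d := hcc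
        _ = (∑ i, Polynomial.aeval a (ψ i) * b i) + γ • d := by rw [hψ]
        _ = ∑ i, (Polynomial.aeval a (ψ i) * b i + (if i = i0 then γ • d else 0)) := by
            rw [Finset.sum_add_distrib, Finset.sum_ite_eq' Finset.univ i0 (fun _ => γ • d),
              if_pos (Finset.mem_univ i0)]
        _ = ∑ i, Polynomial.aeval a (ψ i + if i = i0 then (Polynomial.C γ) * X ^ t else 0) * b i := by
            refine Finset.sum_congr rfl fun i _ => ?_
            exact (hterm i).symm
    intro c hcC
    by_cases hc0 : c = 0
    · exact ⟨0, by simp [hc0]⟩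
    obtain ⟨n, hn⟩ := natval c hcC hc0
    exact key (n + 1) c hcC (by rw [hn]; exact_mod_cast Nat.lt_succ_self n)
  · -- independence
    intro φ hφ i
    by_contra hφi
    set f : Fin k → S := fun j => Polynomial.aeval a (φ j) * b j with hf
    have hfval : ∀ j : Fin k, φ j ≠ 0 →
        χ (f j) = (((m * (φ j).natDegree + N (e j) : ℕ) : ℤ) : WithBot ℤ) := by
      intro j hj
      rw [hf]
      simp only []
      rw [hχ.map_mul, chi_aeval hχ h1 C hB hχa hm hj, hb]
      simp only []
      rw [hbχ (e j), ← WithBot.coe_add]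
      norm_cast
    have hdist : ∀ i' ∈ Finset.univ (α := Fin k), ∀ j ∈ Finset.univ (α := Fin k),
        i' ≠ j → χ (f i') = χ (f j) → χ (f i') = ⊥ := by
      intro i' _ j _ hij heq
      by_cases hi' : φ i' = 0
      · rw [hf]; simp [hi', hχ.chi_zero]
      by_cases hj' : φ j = 0
      · rw [heq, hf]; simp [hj', hχ.chi_zero]
      exfalso
      rw [hfval i' hi', hfval j hj'] at heq
      have heqn : m * (φ i').natDegree + N (e i') = m * (φ j).natDegree + N (e j) := by
        exact_mod_cast heq
      have hzmod : ((N (e i') : ZMod m)) = ((N (e j) : ZMod m)) := by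
        have := congrArg (Nat.cast : ℕ → ZMod m) heqn
        push_cast [ZMod.natCast_self] at this
        simpa using this
      rw [hNcast (e i'), hNcast (e j)] at hzmod
      exact hij (e.injective (Subtype.ext hzmod))
    have hsup := hχ.chi_sum Finset.univ f hdist
    rw [hφ, hχ.chi_zero] at hsup
    have hle : χ (f i) ≤ ⊥ := by
      rw [hsup]
      exact Finset.le_sup (f := fun j => χ (f j)) (Finset.mem_univ i)
    have hfi0 : f i = 0 := (hχ.eq_bot_iff _).1 (le_bot_iff.1 hle)
    have haev : Polynomial.aeval a (φ i) ≠ 0 :=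
      hχ.ne_bot_iff.1 (by rw [chi_aeval hχ h1 C hB hχa hm hφi]; exact WithBot.coe_ne_bot)
    exact hχ.mul_ne_zero' haev (hb0 (e i)) (by rw [hf] at hfi0; exact hfi0)
end

section
/- Let K be a field, R = K[y], σ an endomorphism of R with deg_y(σ(y)) = s > 1, δ a σ-derivation, and S = R[x; σ, δ] the Ore extension. If a ∈ S has x-degree m > 0 with leading coefficient a_m ∈ K[y], and b ∈ S is nonzero of x-degree n commuting with a, with leading coefficient b_n, then a_m·σ^m(b_n) = b_n·σ^n(a_m), and consequently deg_y(b_n) = (s^n − 1)·deg_y(a_m)/(s^m − 1) is uniquely determined by n. -/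
/-!
Comparing the coefficients of `x^(m+n)` in `ab = ba` gives the first identity: since
`x^i r = σ^i(r) x^i + (lower terms)`, the top coefficient of `ab` is `a_m σ^m(b_n)` and that
of `ba` is `b_n σ^n(a_m)`. Any endomorphism `σ` of `K[y]` maps constants to constants (units go
to units), so `σ f = f^κ ∘ σ(y)` for an embedding `κ : K → K`; hence `deg σ(f) = s · deg f`, and
taking `y`-degrees in the first identity gives `deg a_m + s^m deg b_n = deg b_n + s^n deg a_m`.
-/

open Polynomial

/-- Data exhibiting a ring `S` as the Ore extension `R[x; σ, δ]` of `R = K[y]`: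
there is an embedding `ι : K[y] →+* S`, an element `x : S` with
`x · ι r = ι (σ r) · x + ι (δ r)`, `δ` is a `σ`-derivation, and every element
of `S` is uniquely a sum `Σᵢ ι aᵢ · xⁱ`; the unique representation is recorded
by the additive equivalence `rep : S ≃+ (K[y])[x]`. -/
structure OreExt (K : Type*) [Field K] (S : Type*) [Ring S]
    (σ : Polynomial K →+* Polynomial K) (δ : Polynomial K → Polynomial K) where
  ι : Polynomial K →+* S
  x : S
  rep : S ≃+ Polynomial (Polynomial K)
  rep_symm_apply : ∀ p : Polynomial (Polynomial K),
    rep.symm p = p.sum fun i a => ι a * x ^ i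
  comm_rule : ∀ r : Polynomial K, x * ι r = ι (σ r) * x + ι (δ r)
  delta_add : ∀ f g : Polynomial K, δ (f + g) = δ f + δ g
  delta_leibniz : ∀ f g : Polynomial K, δ (f * g) = σ f * δ g + δ f * g

namespace Polynomial

variable {K : Type*} [Field K] (σ : K[X] →+* K[X])

theorem natDegree_ringHom_apply (f : K[X]) :
    (σ f).natDegree = f.natDegree * (σ X).natDegree := by
  set κ : K →+* K := constantCoeff.comp (σ.comp C)
  have hC : σ.comp C = C.comp κ := by
    ext c : 1
    rcases eq_or_ne c 0 with rfl | hc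
    · simp
    · exact eq_C_of_natDegree_eq_zero
        (natDegree_eq_zero_of_isUnit ((isUnit_C.2 hc.isUnit).map σ))
  have hσ : σ = eval₂RingHom (C.comp κ) (σ X) :=
    ringHom_ext' (by rw [hC]; ext; simp) (by simp)
  rw [hσ, coe_eval₂RingHom, ← eval₂_map, ← comp.eq_def, natDegree_comp, natDegree_map, eval₂_X]

theorem natDegree_iterate_ringHom_apply (k : ℕ) (f : K[X]) :
    ((⇑σ)^[k] f).natDegree = f.natDegree * (σ X).natDegree ^ k := by
  induction k with
  | zero => simp
  | succ k ih => rw [Function.iterate_succ_apply', natDegree_ringHom_apply, ih, pow_succ, mul_assoc]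

theorem injective_ringHom_of_natDegree_ne_zero (hσ : (σ X).natDegree ≠ 0) :
    Function.Injective σ := by
  rw [injective_iff_map_eq_zero]
  intro f hf
  have hf0 : f.natDegree = 0 := by
    have := natDegree_ringHom_apply σ f
    rw [hf, natDegree_zero] at this
    exact (mul_eq_zero.1 this.symm).resolve_right hσ
  rw [eq_C_of_natDegree_eq_zero hf0] at hf ⊢
  rw [C_eq_zero]
  by_contra hc
  exact ((isUnit_C.2 (Ne.isUnit hc)).map σ).ne_zero hf

theorem pow_sub_one_mul_natDegree_eq {m n : ℕ} {A B : K[X]} (hσ : (σ X).natDegree ≠ 0)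
    (hA : A ≠ 0) (hB : B ≠ 0) (h : A * (⇑σ)^[m] B = B * (⇑σ)^[n] A) :
    ((σ X).natDegree ^ m - 1) * B.natDegree = ((σ X).natDegree ^ n - 1) * A.natDegree := by
  have hinj := injective_ringHom_of_natDegree_ne_zero σ hσ
  have hσA : (⇑σ)^[n] A ≠ 0 := (hinj.iterate n).ne hA |>.trans_eq (iterate_map_zero σ n)
  have hσB : (⇑σ)^[m] B ≠ 0 := (hinj.iterate m).ne hB |>.trans_eq (iterate_map_zero σ m)
  have hdeg := congrArg natDegree h
  rw [natDegree_mul hA hσB, natDegree_mul hB hσA, natDegree_iterate_ringHom_apply,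
    natDegree_iterate_ringHom_apply] at hdeg
  have hm : 1 ≤ (σ X).natDegree ^ m := Nat.one_le_pow _ _ (Nat.pos_of_ne_zero hσ)
  have hn : 1 ≤ (σ X).natDegree ^ n := Nat.one_le_pow _ _ (Nat.pos_of_ne_zero hσ)
  zify [hm, hn] at hdeg ⊢
  linear_combination hdeg

end Polynomial

namespace OreExt

variable {K S : Type*} [Field K] [Ring S] {σ : K[X] →+* K[X]} {δ : K[X] → K[X]}
  (O : OreExt K S σ δ)

theorem rep_symm_monomial (i : ℕ) (r : K[X]) :
    O.rep.symm (monomial i r) = O.ι r * O.x ^ i := by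
  rw [O.rep_symm_apply, sum_monomial_index]
  simp

theorem rep_ι_mul_mul_x_pow (c : K[X]) (u : S) (j : ℕ) :
    O.rep (O.ι c * u * O.x ^ j) = C c * O.rep u * X ^ j := by
  obtain ⟨p, rfl⟩ := O.rep.symm.surjective u
  rw [O.rep.apply_symm_apply]
  induction p using Polynomial.induction_on' with
  | add p q hp hq => rw [map_add, mul_add, add_mul, map_add, hp, hq]; ring
  | monomial i r =>
    rw [rep_symm_monomial, ← mul_assoc, ← map_mul, mul_assoc, ← pow_add, ← rep_symm_monomial,
      O.rep.apply_symm_apply, C_mul_monomial, monomial_mul_X_pow]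

theorem rep_ι (r : K[X]) : O.rep (O.ι r) = C r := by
  rw [← mul_one (O.ι r), ← pow_zero O.x, ← rep_symm_monomial, O.rep.apply_symm_apply,
    monomial_zero_left]

theorem rep_mul_x (u : S) : O.rep (u * O.x) = O.rep u * X := by
  simpa using O.rep_ι_mul_mul_x_pow 1 u 1

theorem natDegree_le_and_coeff_rep_x_pow_mul_ι (i : ℕ) (r : K[X]) :
    (O.rep (O.x ^ i * O.ι r)).natDegree ≤ i ∧ (O.rep (O.x ^ i * O.ι r)).coeff i = (⇑σ)^[i] r := by
  induction i generalizing r with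
  | zero => simp [rep_ι]
  | succ i ih =>
    obtain ⟨hdeg, hcoeff⟩ := ih (σ r)
    obtain ⟨hdeg', -⟩ := ih (δ r)
    rw [pow_succ, mul_assoc, O.comm_rule, mul_add, ← mul_assoc, map_add, rep_mul_x]
    constructor
    · exact natDegree_add_le_of_degree_le
        (natDegree_mul_le.trans (add_le_add hdeg natDegree_X_le)) (hdeg'.trans i.le_succ)
    · rw [coeff_add, coeff_mul_X, hcoeff, coeff_eq_zero_of_natDegree_lt (Nat.lt_succ_of_le hdeg'),
        add_zero, Function.iterate_succ_apply]

theorem natDegree_le_and_coeff_rep_symm_monomial_mul (i j : ℕ) (c d : K[X]) :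
    (O.rep (O.rep.symm (monomial i c) * O.rep.symm (monomial j d))).natDegree ≤ i + j ∧
      (O.rep (O.rep.symm (monomial i c) * O.rep.symm (monomial j d))).coeff (i + j) =
        c * (⇑σ)^[i] d := by
  obtain ⟨hdeg, hcoeff⟩ := O.natDegree_le_and_coeff_rep_x_pow_mul_ι i d
  rw [rep_symm_monomial, rep_symm_monomial, ← mul_assoc, mul_assoc (O.ι c), rep_ι_mul_mul_x_pow]
  constructor
  · exact natDegree_mul_le.trans
      (add_le_add ((natDegree_C_mul_le _ _).trans hdeg) (natDegree_X_pow_le j))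
  · rw [coeff_mul_X_pow, coeff_C_mul, hcoeff]

theorem coeff_rep_mul (a b : S) :
    (O.rep (a * b)).coeff ((O.rep a).natDegree + (O.rep b).natDegree) =
      (O.rep a).leadingCoeff * (⇑σ)^[(O.rep a).natDegree] (O.rep b).leadingCoeff := by
  set m := (O.rep a).natDegree
  set n := (O.rep b).natDegree
  have hmul : a * b = ∑ ij ∈ Finset.range (m + 1) ×ˢ Finset.range (n + 1),
      O.rep.symm (monomial ij.1 ((O.rep a).coeff ij.1)) *
        O.rep.symm (monomial ij.2 ((O.rep b).coeff ij.2)) := by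
    have hsum (u : S) : u = ∑ i ∈ Finset.range ((O.rep u).natDegree + 1),
        O.rep.symm (monomial i ((O.rep u).coeff i)) := by
      rw [← map_sum, ← as_sum_range, O.rep.symm_apply_apply]
    conv_lhs => rw [hsum a, hsum b]
    rw [Finset.sum_mul_sum, Finset.sum_product]
  rw [hmul, map_sum, finsetSum_coeff, Finset.sum_eq_single_of_mem (m, n) (by simp)]
  · exact (O.natDegree_le_and_coeff_rep_symm_monomial_mul m n _ _).2
  · rintro ⟨i, j⟩ hij hne
    simp only [Finset.mem_product, Finset.mem_range, ne_eq, Prod.mk.injEq] at hij hne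
    exact coeff_eq_zero_of_natDegree_lt
      ((O.natDegree_le_and_coeff_rep_symm_monomial_mul i j _ _).1.trans_lt (by omega))

end OreExt

theorem stmt13_general {K S : Type*} [Field K] [Ring S]
    (σ : Polynomial K →+* Polynomial K) (δ : Polynomial K → Polynomial K)
    (O : OreExt K S σ δ)
    (s : ℕ) (hs : (σ Polynomial.X).natDegree = s) (hs1 : 1 < s)
    (a b : S) (hab : a * b = b * a)
    (m : ℕ) (hm : (O.rep a).natDegree = m)
    (n : ℕ) (hn : (O.rep b).natDegree = n) :
    (O.rep a).leadingCoeff * (⇑σ)^[m] (O.rep b).leadingCoeff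
      = (O.rep b).leadingCoeff * (⇑σ)^[n] (O.rep a).leadingCoeff ∧
    (s ^ m - 1) * (O.rep b).leadingCoeff.natDegree
      = (s ^ n - 1) * (O.rep a).leadingCoeff.natDegree := by
  have hlead : (O.rep a).leadingCoeff * (⇑σ)^[m] (O.rep b).leadingCoeff
      = (O.rep b).leadingCoeff * (⇑σ)^[n] (O.rep a).leadingCoeff := by
    rw [← hm, ← hn, ← O.coeff_rep_mul, ← O.coeff_rep_mul, hab, add_comm]
  refine ⟨hlead, ?_⟩
  subst hs hm hn
  rcases eq_or_ne (O.rep a) 0 with ha | ha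
  · simp [ha]
  rcases eq_or_ne (O.rep b) 0 with hb | hb
  · simp [hb]
  exact pow_sub_one_mul_natDegree_eq σ (by omega) (leadingCoeff_ne_zero.2 ha)
    (leadingCoeff_ne_zero.2 hb) hlead

theorem stmt13 {K S : Type*} [Field K] [Ring S]
    (σ : Polynomial K →+* Polynomial K) (δ : Polynomial K → Polynomial K)
    (O : OreExt K S σ δ)
    (s : ℕ) (hs : (σ Polynomial.X).natDegree = s) (hs1 : 1 < s)
    (a b : S) (hab : a * b = b * a) (hb : b ≠ 0)
    (m : ℕ) (hm : (O.rep a).natDegree = m) (hm0 : 0 < m)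
    (n : ℕ) (hn : (O.rep b).natDegree = n) :
    (O.rep a).leadingCoeff * (⇑σ)^[m] (O.rep b).leadingCoeff
      = (O.rep b).leadingCoeff * (⇑σ)^[n] (O.rep a).leadingCoeff ∧
    (s ^ m - 1) * (O.rep b).leadingCoeff.natDegree
      = (s ^ n - 1) * (O.rep a).leadingCoeff.natDegree :=
  stmt13_general σ δ O s hs hs1 a b hab m hm n hn
end

section
/- Let K be a field, R = K[y], σ an endomorphism of R with deg_y(σ(y)) = s > 1, δ a σ-derivation, and S = R[x; σ, δ]. For a ∈ S with x-degree m > 0, the set of polynomials b_n ∈ K[y] satisfying a_m·σ^m(b_n) = b_n·σ^n(a_m) (where a_m is the leading coefficient of a) is a K-subspace of K[y] of dimension at most 1. -/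
open Polynomial

theorem sigma_eq_comp {K : Type*} [Field K] (σ : Polynomial K →+* Polynomial K)
    (hσK : ∀ c : K, σ (Polynomial.C c) = Polynomial.C c) (f : Polynomial K) :
    σ f = f.comp (σ X) := by
  have h : σ = eval₂RingHom C (σ X) := by
    apply Polynomial.ringHom_ext
    · intro a; simp [hσK a]
    · simp
  conv_lhs => rw [h]
  simp [coe_eval₂RingHom, comp]

theorem sigma_natDegree {K : Type*} [Field K] (σ : Polynomial K →+* Polynomial K)
    (hσK : ∀ c : K, σ (Polynomial.C c) = Polynomial.C c) (f : Polynomial K) :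
    (σ f).natDegree = f.natDegree * (σ X).natDegree := by
  rw [sigma_eq_comp σ hσK, natDegree_comp]

theorem sigma_ne_zero {K : Type*} [Field K] (σ : Polynomial K →+* Polynomial K)
    (hσK : ∀ c : K, σ (Polynomial.C c) = Polynomial.C c)
    (hs : 1 < (σ X).natDegree) {f : Polynomial K} (hf : f ≠ 0) :
    σ f ≠ 0 := by
  rw [sigma_eq_comp σ hσK]
  intro h
  have hlc := leadingCoeff_comp (p := f) (q := σ X) (by omega)
  rw [h, leadingCoeff_zero] at hlc
  have h1 : f.leadingCoeff ≠ 0 := leadingCoeff_ne_zero.2 hf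
  have h2 : (σ X).leadingCoeff ≠ 0 := leadingCoeff_ne_zero.2 (by
    intro h0; rw [h0] at hs; simp at hs)
  exact (mul_ne_zero h1 (pow_ne_zero _ h2)) hlc.symm

theorem sigma_iter_ne_zero {K : Type*} [Field K] (σ : Polynomial K →+* Polynomial K)
    (hσK : ∀ c : K, σ (Polynomial.C c) = Polynomial.C c)
    (hs : 1 < (σ X).natDegree) (k : ℕ) {f : Polynomial K} (hf : f ≠ 0) :
    (⇑σ)^[k] f ≠ 0 := by
  induction k with
  | zero => simpa
  | succ k ih =>
    rw [Function.iterate_succ_apply']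
    exact sigma_ne_zero σ hσK hs ih

theorem sigma_iter_natDegree {K : Type*} [Field K] (σ : Polynomial K →+* Polynomial K)
    (hσK : ∀ c : K, σ (Polynomial.C c) = Polynomial.C c)
    (k : ℕ) (f : Polynomial K) :
    ((⇑σ)^[k] f).natDegree = f.natDegree * (σ X).natDegree ^ k := by
  induction k with
  | zero => simp
  | succ k ih =>
    rw [Function.iterate_succ_apply', sigma_natDegree σ hσK, ih, pow_succ, mul_assoc]

theorem sigma_iter_smul {K : Type*} [Field K] (σ : Polynomial K →+* Polynomial K)
    (hσK : ∀ c : K, σ (Polynomial.C c) = Polynomial.C c)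
    (k : ℕ) (c : K) (f : Polynomial K) :
    (⇑σ)^[k] (c • f) = c • (⇑σ)^[k] f := by
  induction k with
  | zero => simp
  | succ k ih =>
    rw [Function.iterate_succ_apply', ih, Function.iterate_succ_apply',
      Polynomial.smul_eq_C_mul, map_mul, hσK, ← Polynomial.smul_eq_C_mul]

set_option synthInstance.maxHeartbeats 1000000 in
theorem stmt14 {K S : Type*} [Field K] [Ring S]
    (σ : Polynomial K →+* Polynomial K) (δ : Polynomial K → Polynomial K)
    (O : OreExt K S σ δ)
    (hs : 1 < (σ Polynomial.X).natDegree)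
    (hσK : ∀ c : K, σ (Polynomial.C c) = Polynomial.C c)
    (a : S) (m : ℕ) (hm : (O.rep a).natDegree = m) (hm0 : 0 < m)
    (n : ℕ) :
    ∃ V : Submodule K (Polynomial K),
      (V : Set (Polynomial K)) =
        {b : Polynomial K |
          (O.rep a).leadingCoeff * (⇑σ)^[m] b = b * (⇑σ)^[n] (O.rep a).leadingCoeff} ∧
      Module.rank K V ≤ 1 := by
  set L := (O.rep a).leadingCoeff with hL
  have hL0 : L ≠ 0 := by
    rw [hL, leadingCoeff_ne_zero]
    intro h0
    rw [h0] at hm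
    simp at hm
    omega
  refine ⟨{
    carrier := {b : Polynomial K | L * (⇑σ)^[m] b = b * (⇑σ)^[n] L}
    add_mem' := by
      intro b c hb hc
      simp only [Set.mem_setOf_eq] at *
      rw [iterate_map_add, mul_add, add_mul, hb, hc]
    zero_mem' := by
      simp only [Set.mem_setOf_eq, iterate_map_zero, mul_zero, zero_mul]
    smul_mem' := by
      intro c b hb
      simp only [Set.mem_setOf_eq] at *
      rw [sigma_iter_smul σ hσK, smul_mul_assoc, mul_smul_comm, hb]
  }, rfl, ?_⟩
  set s := (σ X).natDegree with hsdef
  have hdeg : ∀ b : Polynomial K, b ≠ 0 → L * (⇑σ)^[m] b = b * (⇑σ)^[n] L →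
      b.natDegree * s ^ m + L.natDegree = b.natDegree + L.natDegree * s ^ n := by
    intro b hb heq
    have h1 : (L * (⇑σ)^[m] b).natDegree = L.natDegree + b.natDegree * s ^ m := by
      rw [natDegree_mul hL0 (sigma_iter_ne_zero σ hσK hs m hb),
        sigma_iter_natDegree σ hσK m b]
    have h2 : (b * (⇑σ)^[n] L).natDegree = b.natDegree + L.natDegree * s ^ n := by
      rw [natDegree_mul hb (sigma_iter_ne_zero σ hσK hs n hL0),
        sigma_iter_natDegree σ hσK n L]
    rw [heq, h2] at h1
    omega
  have hsm : 1 < s ^ m := by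
    calc 1 < s := hs
    _ ≤ s ^ m := Nat.le_self_pow (by omega) s
  have huniq : ∀ b c : Polynomial K, b ≠ 0 → c ≠ 0 →
      L * (⇑σ)^[m] b = b * (⇑σ)^[n] L → L * (⇑σ)^[m] c = c * (⇑σ)^[n] L →
      b.natDegree = c.natDegree := by
    intro b c hb hc h1 h2
    have e1 := hdeg b hb h1
    have e2 := hdeg c hc h2
    have key : b.natDegree * s ^ m + c.natDegree = c.natDegree * s ^ m + b.natDegree := by
      omega
    nlinarith [key, hsm]
  rw [rank_submodule_le_one_iff]
  by_cases hV : ∀ b : Polynomial K, L * (⇑σ)^[m] b = b * (⇑σ)^[n] L → b = 0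
  · refine ⟨0, ?_, ?_⟩
    · show L * (⇑σ)^[m] (0:Polynomial K) = (0:Polynomial K) * (⇑σ)^[n] L
      rw [iterate_map_zero, mul_zero, zero_mul]
    · intro b hb
      have hb0 : b = 0 := hV b hb
      simp [hb0]
  · push_neg at hV
    obtain ⟨b₀, hb₀mem, hb₀⟩ := hV
    refine ⟨b₀, hb₀mem, ?_⟩
    intro b hbmem
    by_cases hb : b = 0
    · simp [hb]
    · have hdb : b.natDegree = b₀.natDegree := huniq b b₀ hb hb₀ hbmem hb₀mem
      set c : Polynomial K := b₀.leadingCoeff • b - b.leadingCoeff • b₀ with hc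
      have hcmem : L * (⇑σ)^[m] c = c * (⇑σ)^[n] L := by
        have h1 : (⇑σ)^[m] c = b₀.leadingCoeff • (⇑σ)^[m] b - b.leadingCoeff • (⇑σ)^[m] b₀ := by
          rw [hc, sub_eq_add_neg, iterate_map_add, sigma_iter_smul σ hσK]
          have hneg : (-(b.leadingCoeff • b₀)) = (-b.leadingCoeff) • b₀ := by
            rw [neg_smul]
          rw [hneg, sigma_iter_smul σ hσK, neg_smul, ← sub_eq_add_neg]
        rw [h1, hc]
        rw [mul_sub, sub_mul, mul_smul_comm, mul_smul_comm, smul_mul_assoc, smul_mul_assoc,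
          hbmem, hb₀mem]
      have hc0 : c = 0 := by
        by_contra hc0
        have hdc : c.natDegree = b₀.natDegree := huniq c b₀ hc0 hb₀ hcmem hb₀mem
        have hcoeff : c.coeff b₀.natDegree = 0 := by
          rw [hc]
          simp only [coeff_sub, coeff_smul, smul_eq_mul]
          rw [← hdb, coeff_natDegree, hdb, coeff_natDegree]
          ring
        rw [← hdc, coeff_natDegree] at hcoeff
        exact leadingCoeff_ne_zero.2 hc0 hcoeff
      have hlc0 : b₀.leadingCoeff ≠ 0 := leadingCoeff_ne_zero.2 hb₀
      rw [Submodule.mem_span_singleton]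
      refine ⟨b.leadingCoeff / b₀.leadingCoeff, ?_⟩
      have heqsmul : b₀.leadingCoeff • b = b.leadingCoeff • b₀ := by
        rwa [sub_eq_zero] at hc0
      rw [div_eq_mul_inv, mul_comm, mul_smul, ← heqsmul, ← mul_smul,
        inv_mul_cancel₀ hlc0, one_smul]
end

section
/- Let K be a field, R = K[y], σ an endomorphism of R with deg_y(σ(y)) > 1, δ a σ-derivation, and S = R[x; σ, δ]. If a ∈ S \ K then the centralizer C_S(a) is a commutative subalgebra of S and a free K[a]-module of finite rank. -/
open Polynomial

namespace Stmt16Aux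


variable {K : Type*} [Field K]

section Sigma
variable (σ : Polynomial K →+* Polynomial K)

theorem sigma_eq_comp (hσK : ∀ c : K, σ (Polynomial.C c) = Polynomial.C c)
    (r : Polynomial K) : σ r = r.comp (σ X) := by
  have h : σ = eval₂RingHom C (σ X) := by
    apply Polynomial.ringHom_ext
    · intro c; simp [hσK c]
    · simp
  conv_lhs => rw [h]
  simp [Polynomial.comp, coe_eval₂RingHom]

theorem sigma_natDegree (hσK : ∀ c : K, σ (Polynomial.C c) = Polynomial.C c)
    (r : Polynomial K) :
    (σ r).natDegree = r.natDegree * (σ X).natDegree := by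
  rw [sigma_eq_comp σ hσK, natDegree_comp]

theorem sigma_ne_zero (hs : 1 < (σ Polynomial.X).natDegree)
    (hσK : ∀ c : K, σ (Polynomial.C c) = Polynomial.C c)
    {r : Polynomial K} (hr : r ≠ 0) : σ r ≠ 0 := by
  have h1 : (σ X).natDegree ≠ 0 := by omega
  have := Polynomial.leadingCoeff_comp (p := r) (q := σ X) h1
  intro h0
  rw [sigma_eq_comp σ hσK] at h0
  rw [h0, leadingCoeff_zero] at this
  have h2 : (σ X).leadingCoeff ≠ 0 := leadingCoeff_ne_zero.2 (by
    intro h; rw [h] at h1; simp at h1)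
  have h3 : r.leadingCoeff ≠ 0 := leadingCoeff_ne_zero.2 hr
  exact (mul_ne_zero h3 (pow_ne_zero _ h2)) this.symm

theorem sigma_iter_natDegree (hσK : ∀ c : K, σ (Polynomial.C c) = Polynomial.C c)
    (i : ℕ) (r : Polynomial K) :
    ((⇑σ)^[i] r).natDegree = (σ X).natDegree ^ i * r.natDegree := by
  induction i generalizing r with
  | zero => simp
  | succ i ih =>
    rw [Function.iterate_succ_apply, ih, sigma_natDegree σ hσK r]
    ring

theorem sigma_iter_ne_zero (hs : 1 < (σ Polynomial.X).natDegree)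
    (hσK : ∀ c : K, σ (Polynomial.C c) = Polynomial.C c)
    (i : ℕ) {r : Polynomial K} (hr : r ≠ 0) : (⇑σ)^[i] r ≠ 0 := by
  induction i with
  | zero => simpa
  | succ i ih => rw [Function.iterate_succ_apply']; exact sigma_ne_zero σ hs hσK ih

/-- Key coprimality lemma: if σⁿU·V = σⁿV·U with n ≥ 1 then U, V are K-proportional. -/
theorem prop_of_sigma_rel (hs : 1 < (σ Polynomial.X).natDegree)
    (hσK : ∀ c : K, σ (Polynomial.C c) = Polynomial.C c)
    {n : ℕ} (hn : 1 ≤ n) {U V : Polynomial K}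
    (hU : U ≠ 0) (hV : V ≠ 0)
    (h : (⇑σ)^[n] U * V = (⇑σ)^[n] V * U) :
    ∃ lam : K, U = Polynomial.C lam * V := by
  classical
  set g := GCDMonoid.gcd U V with hg
  have hgU : g ∣ U := gcd_dvd_left U V
  have hgV : g ∣ V := gcd_dvd_right U V
  have hgne : g ≠ 0 := gcd_ne_zero_of_left hU
  set U₀ := U / g with hU₀
  set V₀ := V / g with hV₀
  have hUg : g * U₀ = U := EuclideanDomain.mul_div_cancel' hgne hgU
  have hVg : g * V₀ = V := EuclideanDomain.mul_div_cancel' hgne hgV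
  have hU₀ne : U₀ ≠ 0 := by intro h0; rw [h0, mul_zero] at hUg; exact hU hUg.symm
  have hV₀ne : V₀ ≠ 0 := by intro h0; rw [h0, mul_zero] at hVg; exact hV hVg.symm
  have hcop : IsCoprime U₀ V₀ := isCoprime_div_gcd_div_gcd hV
  have hpow : ∀ r : Polynomial K, (⇑σ)^[n] r = (σ^n) r := by
    intro r; rw [RingHom.coe_pow]
  have h2n : 2 ≤ (σ X).natDegree ^ n := by
    calc 2 = 2^1 := rfl
    _ ≤ 2 ^ n := Nat.pow_le_pow_right (by norm_num) hn
    _ ≤ (σ X).natDegree ^ n := Nat.pow_le_pow_left hs n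
  have h' : (σ^n) U₀ * V₀ = (σ^n) V₀ * U₀ := by
    have hσg : (σ^n) g ≠ 0 := by
      rw [← hpow]; exact sigma_iter_ne_zero σ hs hσK n hgne
    apply mul_left_cancel₀ (mul_ne_zero hσg hgne)
    have e1 : (⇑σ)^[n] U = (σ^n) g * (σ^n) U₀ := by rw [hpow, ← map_mul, hUg]
    have e2 : (⇑σ)^[n] V = (σ^n) g * (σ^n) V₀ := by rw [hpow, ← map_mul, hVg]
    rw [e1, e2, ← hUg, ← hVg] at h
    ring_nf
    ring_nf at h
    linear_combination h
  have hcop' : IsCoprime ((σ^n) U₀) ((σ^n) V₀) := IsCoprime.map hcop (σ^n)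
  have d1 : U₀ ∣ (σ^n) U₀ := by
    have : U₀ ∣ (σ^n) U₀ * V₀ := ⟨(σ^n) V₀, by linear_combination h'⟩
    exact (IsCoprime.dvd_of_dvd_mul_right hcop this)
  have d2 : (σ^n) U₀ ∣ U₀ := by
    have h2 : (σ^n) U₀ ∣ (σ^n) V₀ * U₀ := h' ▸ dvd_mul_right _ _
    exact (IsCoprime.dvd_of_dvd_mul_left hcop' h2)
  have hσU₀ne : (σ^n) U₀ ≠ 0 := by rw [← hpow]; exact sigma_iter_ne_zero σ hs hσK n hU₀ne
  have hdeg : ((σ^n) U₀).natDegree = U₀.natDegree :=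
    le_antisymm (natDegree_le_of_dvd d2 hU₀ne) (natDegree_le_of_dvd d1 hσU₀ne)
  rw [← hpow, sigma_iter_natDegree σ hσK] at hdeg
  have hU₀deg : U₀.natDegree = 0 := by
    by_contra hne
    nlinarith [Nat.pos_of_ne_zero hne]
  have d1' : V₀ ∣ (σ^n) V₀ := by
    have h2 : V₀ ∣ (σ^n) U₀ * V₀ := dvd_mul_left _ _
    rw [h'] at h2
    exact (IsCoprime.dvd_of_dvd_mul_right hcop.symm (by
      rcases h2 with ⟨w, hw⟩; exact ⟨w, by linear_combination hw⟩))
  have d2' : (σ^n) V₀ ∣ V₀ := by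
    have h2 : (σ^n) V₀ ∣ (σ^n) V₀ * U₀ := dvd_mul_right _ _
    rw [← h'] at h2
    exact (IsCoprime.dvd_of_dvd_mul_left hcop'.symm h2)
  have hσV₀ne : (σ^n) V₀ ≠ 0 := by rw [← hpow]; exact sigma_iter_ne_zero σ hs hσK n hV₀ne
  have hdeg' : ((σ^n) V₀).natDegree = V₀.natDegree :=
    le_antisymm (natDegree_le_of_dvd d2' hV₀ne) (natDegree_le_of_dvd d1' hσV₀ne)
  rw [← hpow, sigma_iter_natDegree σ hσK] at hdeg'
  have hV₀deg : V₀.natDegree = 0 := by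
    by_contra hne
    nlinarith [Nat.pos_of_ne_zero hne]
  obtain ⟨u₀, hu₀⟩ : ∃ c, Polynomial.C c = U₀ := natDegree_eq_zero.1 hU₀deg
  obtain ⟨v₀, hv₀⟩ : ∃ c, Polynomial.C c = V₀ := natDegree_eq_zero.1 hV₀deg
  have hv₀ne : v₀ ≠ 0 := by rintro rfl; simp at hv₀; exact hV₀ne hv₀.symm
  refine ⟨u₀ / v₀, ?_⟩
  rw [← hUg, ← hVg, ← hu₀, ← hv₀]
  have hc : Polynomial.C (v₀⁻¹) * Polynomial.C v₀ = 1 := by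
    rw [← map_mul, inv_mul_cancel₀ hv₀ne, map_one]
  rw [div_eq_mul_inv, map_mul]
  calc g * C u₀ = g * C u₀ * (C v₀⁻¹ * C v₀) := by rw [hc, mul_one]
  _ = C u₀ * C v₀⁻¹ * (g * C v₀) := by ring

end Sigma



variable {K : Type*} [Field K] {S : Type*} [Ring S]
  {σ : Polynomial K →+* Polynomial K} {δ : Polynomial K → Polynomial K}

/-- coefficientwise application of δ -/
noncomputable def Tdel (δ : Polynomial K → Polynomial K) (p : Polynomial (Polynomial K)) :
    Polynomial (Polynomial K) := p.sum fun i c => monomial i (δ c)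

theorem delta_zero (O : OreExt K S σ δ) : δ 0 = 0 := by
  have h := O.delta_add 0 0
  rw [add_zero] at h
  exact add_eq_left.mp h.symm

variable (O : OreExt K S σ δ)

theorem rep_symm_monomial (n : ℕ) (c : Polynomial K) :
    O.rep.symm (monomial n c) = O.ι c * O.x ^ n := by
  rw [O.rep_symm_apply, Polynomial.sum_monomial_index]
  simp

theorem rep_iota (r : Polynomial K) : O.rep (O.ι r) = C r := by
  have : O.rep.symm (C r) = O.ι r := by
    rw [← Polynomial.monomial_zero_left, rep_symm_monomial]
    simp
  rw [← this, AddEquiv.apply_symm_apply]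

theorem rep_x : O.rep O.x = X := by
  have : O.rep.symm (X : Polynomial (Polynomial K)) = O.x := by
    rw [← Polynomial.monomial_one_one_eq_X, rep_symm_monomial]
    simp
  rw [← this, AddEquiv.apply_symm_apply]

theorem iota_injective : Function.Injective O.ι := by
  intro r s h
  have := congrArg O.rep h
  rw [rep_iota, rep_iota] at this
  exact Polynomial.C_injective this

theorem rep_iota_mul (r : Polynomial K) (s : S) :
    O.rep (O.ι r * s) = C r * O.rep s := by
  have key : ∀ p : Polynomial (Polynomial K),
      O.ι r * O.rep.symm p = O.rep.symm (C r * p) := by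
    intro p
    induction p using Polynomial.induction_on' with
    | add p q hp hq => rw [map_add, mul_add, hp, hq, mul_add, map_add]
    | monomial n c =>
      rw [rep_symm_monomial, Polynomial.C_mul_monomial, rep_symm_monomial,
        ← mul_assoc, ← map_mul]
  have := key (O.rep s)
  rw [AddEquiv.symm_apply_apply] at this
  rw [this, AddEquiv.apply_symm_apply]

theorem coeff_Tdel (hδ0 : δ 0 = 0) (p : Polynomial (Polynomial K)) (k : ℕ) :
    (Tdel δ p).coeff k = δ (p.coeff k) := by
  classical
  rw [Tdel, Polynomial.sum_def, Polynomial.finset_sum_coeff]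
  simp only [Polynomial.coeff_monomial]
  rw [Finset.sum_ite_eq' p.support k (fun i => δ (p.coeff i))]
  by_cases h : k ∈ p.support
  · simp [h]
  · simp [h, Polynomial.notMem_support_iff.1 h, hδ0]

theorem rep_x_mul (s : S) :
    O.rep (O.x * s) = (O.rep s).map σ * X + Tdel δ (O.rep s) := by
  have hδ0 : δ 0 = 0 := delta_zero O
  have key : ∀ p : Polynomial (Polynomial K),
      O.x * O.rep.symm p = O.rep.symm (p.map σ * X + Tdel δ p) := by
    intro p
    induction p using Polynomial.induction_on' with
    | add p q hp hq =>
      have hT : Tdel δ (p + q) = Tdel δ p + Tdel δ q := by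
        rw [Tdel, Polynomial.sum_add_index] <;>
          simp [hδ0, O.delta_add, Tdel]
      rw [map_add, mul_add, hp, hq, Polynomial.map_add, hT, ← map_add]
      congr 1
      ring
    | monomial n c =>
      rw [rep_symm_monomial, ← mul_assoc, O.comm_rule, Polynomial.map_monomial]
      have hT : Tdel δ (monomial n c) = monomial n (δ c) := by
        rw [Tdel, Polynomial.sum_monomial_index]
        rw [hδ0]; simp
      rw [hT]
      have hX : (monomial n (σ c) : Polynomial (Polynomial K)) * X = monomial (n+1) (σ c) := by
        rw [← Polynomial.monomial_one_one_eq_X, Polynomial.monomial_mul_monomial, mul_one]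
      rw [hX, map_add, rep_symm_monomial, rep_symm_monomial]
      rw [add_mul, mul_assoc, ← pow_succ']
  have := key (O.rep s)
  rw [AddEquiv.symm_apply_apply] at this
  rw [this, AddEquiv.apply_symm_apply]


noncomputable def dS (s : S) : ℕ := (O.rep s).natDegree
noncomputable def lS (s : S) : Polynomial K := (O.rep s).leadingCoeff

theorem rep_eq_zero_iff (s : S) : O.rep s = 0 ↔ s = 0 := by
  constructor
  · intro h
    have := congrArg O.rep.symm h
    rwa [AddEquiv.symm_apply_apply, map_zero] at this
  · rintro rfl; exact map_zero _

theorem lS_ne_zero {s : S} (hsne : s ≠ 0) : lS O s ≠ 0 := by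
  rw [lS, Polynomial.leadingCoeff_ne_zero]
  exact fun h => hsne ((rep_eq_zero_iff O s).1 h)

theorem sigma_iter_zero (j : ℕ) : (⇑σ)^[j] (0 : Polynomial K) = 0 := by
  induction j with
  | zero => rfl
  | succ j ih => rw [Function.iterate_succ_apply, map_zero, ih]

theorem x_mul_bound (s : S) :
    (O.rep (O.x * s)).natDegree ≤ dS O s + 1 ∧
    (O.rep (O.x * s)).coeff (dS O s + 1) = σ (lS O s) := by
  have hδ0 : δ 0 = 0 := delta_zero O
  rw [rep_x_mul O s]
  constructor
  · apply Polynomial.natDegree_add_le_of_degree_le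
    · apply le_trans (Polynomial.natDegree_mul_le)
      have h1 := Polynomial.natDegree_map_le (f := σ) (p := O.rep s)
      have h2 : (X : Polynomial (Polynomial K)).natDegree = 1 := Polynomial.natDegree_X
      have h3 : dS O s = (O.rep s).natDegree := rfl
      omega
    · rw [Polynomial.natDegree_le_iff_coeff_eq_zero]
      intro N hN
      have h3 : dS O s = (O.rep s).natDegree := rfl
      have hz : (O.rep s).coeff N = 0 :=
        Polynomial.coeff_eq_zero_of_natDegree_lt (by omega)
      rw [coeff_Tdel hδ0, hz, hδ0]
  · have h3 : dS O s = (O.rep s).natDegree := rfl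
    have hz : (O.rep s).coeff (dS O s + 1) = 0 :=
      Polynomial.coeff_eq_zero_of_natDegree_lt (by omega)
    rw [Polynomial.coeff_add, Polynomial.coeff_mul_X, Polynomial.coeff_map,
      coeff_Tdel hδ0, hz, hδ0, add_zero, dS, lS, Polynomial.leadingCoeff]

theorem x_mul_exact (hs : 1 < (σ Polynomial.X).natDegree)
    (hσK : ∀ c : K, σ (Polynomial.C c) = Polynomial.C c)
    {s : S} (hsne : s ≠ 0) :
    O.x * s ≠ 0 ∧ dS O (O.x * s) = dS O s + 1 ∧ lS O (O.x * s) = σ (lS O s) := by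
  obtain ⟨h1, h2⟩ := x_mul_bound O s
  have hl : σ (lS O s) ≠ 0 := sigma_ne_zero σ hs hσK (lS_ne_zero O hsne)
  have hne : O.rep (O.x * s) ≠ 0 := fun h => by rw [h] at h2; simp at h2; exact hl h2.symm
  have hdeg : (O.rep (O.x * s)).natDegree = dS O s + 1 := by
    refine le_antisymm h1 ?_
    exact Polynomial.le_natDegree_of_ne_zero (by rw [h2]; exact hl)
  refine ⟨fun h => hne (by rw [h, map_zero]), hdeg, ?_⟩
  rw [lS, Polynomial.leadingCoeff, hdeg]
  rw [dS] at h2 ⊢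
  exact h2

theorem xpow_mul (hs : 1 < (σ Polynomial.X).natDegree)
    (hσK : ∀ c : K, σ (Polynomial.C c) = Polynomial.C c)
    (j : ℕ) (s : S) :
    (O.rep (O.x ^ j * s)).natDegree ≤ j + dS O s ∧
    (O.rep (O.x ^ j * s)).coeff (j + dS O s) = (⇑σ)^[j] (lS O s) := by
  induction j generalizing s with
  | zero =>
    simp only [pow_zero, one_mul, Function.iterate_zero, id_eq, zero_add]
    exact ⟨le_refl _, rfl⟩
  | succ j ih =>
    by_cases hsne : s = 0
    · subst hsne
      have hz : lS O (0 : S) = 0 := by rw [lS, map_zero]; simp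
      rw [mul_zero, map_zero, hz, sigma_iter_zero]
      simp
    · have hx := x_mul_exact O hs hσK hsne
      have heq : O.x ^ (j+1) * s = O.x ^ j * (O.x * s) := by
        rw [pow_succ, mul_assoc]
      obtain ⟨hne, hdeg, hlc⟩ := hx
      obtain ⟨ih1, ih2⟩ := ih (O.x * s)
      rw [heq]
      constructor
      · refine le_trans ih1 ?_; rw [hdeg]; omega
      · have : j + 1 + dS O s = j + dS O (O.x * s) := by rw [hdeg]; omega
        rw [this, ih2, hlc, ← Function.iterate_succ_apply, Function.iterate_succ_apply']

theorem mul_coeff (hs : 1 < (σ Polynomial.X).natDegree)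
    (hσK : ∀ c : K, σ (Polynomial.C c) = Polynomial.C c)
    (s t : S) :
    (O.rep (s * t)).natDegree ≤ dS O s + dS O t ∧
    (O.rep (s * t)).coeff (dS O s + dS O t) = lS O s * (⇑σ)^[dS O s] (lS O t) := by
  classical
  have hrep : s = (O.rep s).sum fun j c => O.ι c * O.x ^ j := by
    conv_lhs => rw [← O.rep.symm_apply_apply s, O.rep_symm_apply]
  have hmul : s * t = ∑ j ∈ (O.rep s).support, O.ι ((O.rep s).coeff j) * (O.x ^ j * t) := by
    conv_lhs => rw [hrep]
    rw [Polynomial.sum_def, Finset.sum_mul]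
    exact Finset.sum_congr rfl fun j _ => by rw [mul_assoc]
  have hrepmul : O.rep (s * t)
      = ∑ j ∈ (O.rep s).support, Polynomial.C ((O.rep s).coeff j) * O.rep (O.x ^ j * t) := by
    rw [hmul, map_sum]
    exact Finset.sum_congr rfl fun j _ => rep_iota_mul O _ _
  constructor
  · rw [hrepmul]
    apply Polynomial.natDegree_sum_le_of_forall_le
    intro j hj
    apply le_trans (Polynomial.natDegree_C_mul_le _ _)
    refine le_trans (xpow_mul O hs hσK j t).1 ?_
    have h4 := Polynomial.le_natDegree_of_mem_supp j hj
    have h3 : dS O s = (O.rep s).natDegree := rfl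
    omega
  · rw [hrepmul, Polynomial.finset_sum_coeff]
    have hsplit : ∀ j ∈ (O.rep s).support,
        (Polynomial.C ((O.rep s).coeff j) * O.rep (O.x ^ j * t)).coeff (dS O s + dS O t)
        = if j = dS O s then lS O s * (⇑σ)^[dS O s] (lS O t) else 0 := by
      intro j hj
      rw [Polynomial.coeff_C_mul]
      by_cases hje : j = dS O s
      · rw [if_pos hje, hje, (xpow_mul O hs hσK (dS O s) t).2]
        congr 1
      · have h4 := Polynomial.le_natDegree_of_mem_supp j hj
        have h3 : dS O s = (O.rep s).natDegree := rfl
        have hjlt : j < dS O s := by omega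
        have hz : (O.rep (O.x ^ j * t)).coeff (dS O s + dS O t) = 0 := by
          apply Polynomial.coeff_eq_zero_of_natDegree_lt
          have := (xpow_mul O hs hσK j t).1
          omega
        rw [if_neg hje, hz, mul_zero]
    rw [Finset.sum_congr rfl hsplit]
    rw [Finset.sum_ite_eq' (O.rep s).support (dS O s)
      (fun _ => lS O s * (⇑σ)^[dS O s] (lS O t))]
    by_cases hmem : dS O s ∈ (O.rep s).support
    · rw [if_pos hmem]
    · rw [if_neg hmem]
      have : lS O s = 0 := by
        rw [lS, Polynomial.leadingCoeff, ← dS]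
        exact Polynomial.notMem_support_iff.1 hmem
      rw [this, zero_mul]

theorem mul_facts (hs : 1 < (σ Polynomial.X).natDegree)
    (hσK : ∀ c : K, σ (Polynomial.C c) = Polynomial.C c)
    {s t : S} (hsne : s ≠ 0) (htne : t ≠ 0) :
    s * t ≠ 0 ∧ dS O (s * t) = dS O s + dS O t ∧
      lS O (s * t) = lS O s * (⇑σ)^[dS O s] (lS O t) := by
  obtain ⟨h1, h2⟩ := mul_coeff O hs hσK s t
  have hl : lS O s * (⇑σ)^[dS O s] (lS O t) ≠ 0 :=
    mul_ne_zero (lS_ne_zero O hsne) (sigma_iter_ne_zero σ hs hσK _ (lS_ne_zero O htne))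
  have hne : O.rep (s * t) ≠ 0 := fun h => by
    rw [h] at h2; simp only [Polynomial.coeff_zero] at h2; exact hl h2.symm
  have hdeg : (O.rep (s * t)).natDegree = dS O s + dS O t :=
    le_antisymm h1 (Polynomial.le_natDegree_of_ne_zero (by rw [h2]; exact hl))
  refine ⟨fun h => hne (by rw [h, map_zero]), hdeg, ?_⟩
  rw [lS, Polynomial.leadingCoeff, hdeg, ← h2, dS]


theorem xpow_iota_C (hσK : ∀ c : K, σ (Polynomial.C c) = Polynomial.C c)
    (hδK : ∀ c : K, δ (Polynomial.C c) = 0) (c : K) (n : ℕ) :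
    O.x ^ n * O.ι (Polynomial.C c) = O.ι (Polynomial.C c) * O.x ^ n := by
  induction n with
  | zero => simp
  | succ n ih =>
    rw [pow_succ, mul_assoc, O.comm_rule, hσK, hδK, map_zero, add_zero,
      ← mul_assoc, ih, mul_assoc]

theorem iota_C_central (hσK : ∀ c : K, σ (Polynomial.C c) = Polynomial.C c)
    (hδK : ∀ c : K, δ (Polynomial.C c) = 0) (c : K) (t : S) :
    O.ι (Polynomial.C c) * t = t * O.ι (Polynomial.C c) := by
  have key : ∀ p : Polynomial (Polynomial K),
      O.ι (Polynomial.C c) * O.rep.symm p = O.rep.symm p * O.ι (Polynomial.C c) := by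
    intro p
    induction p using Polynomial.induction_on' with
    | add p q hp hq => rw [map_add, mul_add, add_mul, hp, hq]
    | monomial n b =>
      rw [rep_symm_monomial, ← mul_assoc, ← map_mul, mul_assoc,
        xpow_iota_C O hσK hδK, ← mul_assoc, ← map_mul, mul_comm (Polynomial.C c) b]
  have := key (O.rep t)
  rwa [AddEquiv.symm_apply_apply] at this

theorem dS_pos_ne_zero {a : S} (hn : 1 ≤ dS O a) : a ≠ 0 := by
  intro h
  rw [h] at hn
  have : dS O (0 : S) = 0 := by rw [dS, map_zero, Polynomial.natDegree_zero]
  omega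

/-- leading coefficient relation for an element commuting with a -/
theorem lc_rel (hs : 1 < (σ Polynomial.X).natDegree)
    (hσK : ∀ c : K, σ (Polynomial.C c) = Polynomial.C c)
    {a u : S} (ha0 : a ≠ 0) (hu : u ≠ 0) (hcomm : u * a = a * u) :
    lS O u * (⇑σ)^[dS O u] (lS O a) = lS O a * (⇑σ)^[dS O a] (lS O u) := by
  have h1 := (mul_facts O hs hσK hu ha0).2.2
  have h2 := (mul_facts O hs hσK ha0 hu).2.2
  rw [hcomm] at h1
  rw [← h1]
  exact h2

/-- same-degree elements of the centralizer have K-proportional leading coefficients -/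
theorem same_deg_prop (hs : 1 < (σ Polynomial.X).natDegree)
    (hσK : ∀ c : K, σ (Polynomial.C c) = Polynomial.C c)
    {a u v : S} (hn : 1 ≤ dS O a) (hu : u ≠ 0) (hv : v ≠ 0)
    (hua : u * a = a * u) (hva : v * a = a * v)
    (hdeg : dS O u = dS O v) :
    ∃ lam : K, lS O u = Polynomial.C lam * lS O v := by
  have ha0 : a ≠ 0 := dS_pos_ne_zero O hn
  have e1 := lc_rel O hs hσK ha0 hu hua
  have e2 := lc_rel O hs hσK ha0 hv hva
  rw [hdeg] at e1
  set n := dS O a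
  set m := dS O v
  set U := lS O u
  set V := lS O v
  set A := lS O a
  have hA : A ≠ 0 := lS_ne_zero O ha0
  have hU : U ≠ 0 := lS_ne_zero O hu
  have hV : V ≠ 0 := lS_ne_zero O hv
  -- e1 : U * σ^[m] A = A * σ^[n] U ; e2 : V * σ^[m] A = A * σ^[n] V
  have key : (⇑σ)^[n] U * V = (⇑σ)^[n] V * U := by
    have h3 : A * ((⇑σ)^[n] U * V) = A * ((⇑σ)^[n] V * U) := by
      calc A * ((⇑σ)^[n] U * V) = (A * (⇑σ)^[n] U) * V := by ring
      _ = (U * (⇑σ)^[m] A) * V := by rw [e1]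
      _ = (V * (⇑σ)^[m] A) * U := by ring
      _ = (A * (⇑σ)^[n] V) * U := by rw [e2]
      _ = A * ((⇑σ)^[n] V * U) := by ring
    exact mul_left_cancel₀ hA h3
  exact prop_of_sigma_rel σ hs hσK hn hU hV key

/-- degree-0 centralizer elements are scalars (when dS a ≥ 1) -/
theorem deg_zero_scalar (hs : 1 < (σ Polynomial.X).natDegree)
    (hσK : ∀ c : K, σ (Polynomial.C c) = Polynomial.C c)
    {a u : S} (hn : 1 ≤ dS O a) (hu : u ≠ 0)
    (hcomm : u * a = a * u) (hdu : dS O u = 0) :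
    ∃ c : K, u = O.ι (Polynomial.C c) := by
  have ha0 : a ≠ 0 := dS_pos_ne_zero O hn
  have e1 := lc_rel O hs hσK ha0 hu hcomm
  rw [hdu] at e1
  simp only [Function.iterate_zero, id_eq] at e1
  -- e1 : lS u * lS a = lS a * σ^[n] (lS u)
  have hfix : (⇑σ)^[dS O a] (lS O u) = lS O u := by
    have hA : lS O a ≠ 0 := lS_ne_zero O ha0
    apply mul_left_cancel₀ hA
    rw [← e1]; ring
  have hdeg := congrArg Polynomial.natDegree hfix
  rw [sigma_iter_natDegree σ hσK] at hdeg
  have h2 : 2 ≤ (σ X).natDegree ^ (dS O a) := by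
    calc 2 = 2^1 := rfl
    _ ≤ 2 ^ (dS O a) := Nat.pow_le_pow_right (by norm_num) hn
    _ ≤ (σ X).natDegree ^ (dS O a) := Nat.pow_le_pow_left hs _
  have hU : lS O u ≠ 0 := lS_ne_zero O hu
  have hdeg0 : (lS O u).natDegree = 0 := by nlinarith
  obtain ⟨c, hc⟩ := Polynomial.natDegree_eq_zero.1 hdeg0
  refine ⟨c, ?_⟩
  have hrep : O.rep u = Polynomial.C (Polynomial.C c) := by
    have h3 := Polynomial.eq_C_of_natDegree_eq_zero (p := O.rep u) hdu
    rw [h3]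
    congr 1
    have : lS O u = (O.rep u).coeff 0 := by
      rw [lS, Polynomial.leadingCoeff, dS] at *
      rw [hdu]
    rw [← this, ← hc]
  have := congrArg O.rep.symm hrep
  rw [AddEquiv.symm_apply_apply, ← Polynomial.monomial_zero_left, rep_symm_monomial] at this
  simpa using this

theorem commute_Ev (hσK : ∀ c : K, σ (Polynomial.C c) = Polynomial.C c)
    (hδK : ∀ c : K, δ (Polynomial.C c) = 0)
    {a u : S} (h : u * a = a * u) (θ : Polynomial K) :
    Commute u (Polynomial.eval₂ (O.ι.comp Polynomial.C) a θ) := by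
  rw [Polynomial.eval₂_eq_sum, Polynomial.sum_def]
  apply Commute.sum_right
  intro i _
  have h1 : Commute u (O.ι.comp Polynomial.C (θ.coeff i)) :=
    (iota_C_central O hσK hδK (θ.coeff i) u).symm
  have h2 : Commute u a := h
  exact h1.mul_right (h2.pow_right i)

theorem a_pow_facts (hs : 1 < (σ Polynomial.X).natDegree)
    (hσK : ∀ c : K, σ (Polynomial.C c) = Polynomial.C c)
    {a : S} (ha0 : a ≠ 0) (i : ℕ) :
    a ^ i ≠ 0 ∧ dS O (a ^ i) = i * dS O a := by
  induction i with
  | zero =>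
    have hrep1 : O.rep (1 : S) = Polynomial.C (Polynomial.C (1:K)) := by
      have h1 : (1 : S) = O.ι 1 := (map_one O.ι).symm
      rw [h1, rep_iota]; simp
    constructor
    · intro h
      rw [pow_zero] at h
      rw [h, map_zero] at hrep1
      have hne : (Polynomial.C (Polynomial.C (1:K)) : Polynomial (Polynomial K)) ≠ 0 := by
        simp
      exact hne hrep1.symm
    · rw [pow_zero, dS, hrep1]; simp
  | succ i ih =>
    have := mul_facts O hs hσK ih.1 ha0
    rw [← pow_succ] at this
    exact ⟨this.1, by rw [this.2.1, ih.2]; ring⟩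

theorem Ev_facts (hs : 1 < (σ Polynomial.X).natDegree)
    (hσK : ∀ c : K, σ (Polynomial.C c) = Polynomial.C c)
    {a : S} (hn : 1 ≤ dS O a) {θ : Polynomial K} (hθ : θ ≠ 0) :
    Polynomial.eval₂ (O.ι.comp Polynomial.C) a θ ≠ 0 ∧
    dS O (Polynomial.eval₂ (O.ι.comp Polynomial.C) a θ) = dS O a * θ.natDegree := by
  classical
  have ha0 : a ≠ 0 := dS_pos_ne_zero O hn
  set n := dS O a
  set D := θ.natDegree
  have hrepEv : O.rep (Polynomial.eval₂ (O.ι.comp Polynomial.C) a θ)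
      = ∑ i ∈ θ.support, Polynomial.C (Polynomial.C (θ.coeff i)) * O.rep (a ^ i) := by
    rw [Polynomial.eval₂_eq_sum, Polynomial.sum_def, map_sum]
    exact Finset.sum_congr rfl fun i _ => rep_iota_mul O _ _
  have hbound : (O.rep (Polynomial.eval₂ (O.ι.comp Polynomial.C) a θ)).natDegree ≤ n * D := by
    rw [hrepEv]
    apply Polynomial.natDegree_sum_le_of_forall_le
    intro i hi
    apply le_trans (Polynomial.natDegree_C_mul_le _ _)
    have h1 : dS O (a^i) = i * n := (a_pow_facts O hs hσK ha0 i).2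
    have h2 : i ≤ D := Polynomial.le_natDegree_of_mem_supp i hi
    have h3 : dS O (a^i) = (O.rep (a^i)).natDegree := rfl
    nlinarith
  have hcoeff : (O.rep (Polynomial.eval₂ (O.ι.comp Polynomial.C) a θ)).coeff (n * D)
      = Polynomial.C (θ.coeff D) * lS O (a ^ D) := by
    rw [hrepEv, Polynomial.finset_sum_coeff]
    have hsplit : ∀ i ∈ θ.support,
        (Polynomial.C (Polynomial.C (θ.coeff i)) * O.rep (a ^ i)).coeff (n * D)
        = if i = D then Polynomial.C (θ.coeff D) * lS O (a ^ D) else 0 := by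
      intro i hi
      rw [Polynomial.coeff_C_mul]
      by_cases hie : i = D
      · rw [if_pos hie, hie]
        congr 1
        have h1 : dS O (a^D) = D * n := (a_pow_facts O hs hσK ha0 D).2
        rw [lS, Polynomial.leadingCoeff, ← dS, h1, Nat.mul_comm]
      · have h2 : i ≤ D := Polynomial.le_natDegree_of_mem_supp i hi
        have hilt : i < D := by omega
        have hz : (O.rep (a ^ i)).coeff (n * D) = 0 := by
          apply Polynomial.coeff_eq_zero_of_natDegree_lt
          have h1 : dS O (a^i) = i * n := (a_pow_facts O hs hσK ha0 i).2
          have h3 : dS O (a^i) = (O.rep (a^i)).natDegree := rfl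
          nlinarith
        rw [if_neg hie, hz, mul_zero]
    rw [Finset.sum_congr rfl hsplit,
      Finset.sum_ite_eq' θ.support D (fun _ => Polynomial.C (θ.coeff D) * lS O (a ^ D))]
    rw [if_pos (Polynomial.natDegree_mem_support_of_nonzero hθ)]
  have hlcne : Polynomial.C (θ.coeff D) * lS O (a ^ D) ≠ 0 := by
    apply mul_ne_zero
    · rw [Ne, Polynomial.C_eq_zero]
      exact Polynomial.leadingCoeff_ne_zero.2 hθ
    · exact lS_ne_zero O (a_pow_facts O hs hσK ha0 D).1
  have hne : O.rep (Polynomial.eval₂ (O.ι.comp Polynomial.C) a θ) ≠ 0 := by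
    intro h
    rw [h, Polynomial.coeff_zero] at hcoeff
    exact hlcne hcoeff.symm
  constructor
  · intro h; rw [h, map_zero] at hne; exact hne rfl
  · refine le_antisymm hbound ?_
    exact Polynomial.le_natDegree_of_ne_zero (by rw [hcoeff]; exact hlcne)

include O in
theorem mul_ne_zero_S (hs : 1 < (σ Polynomial.X).natDegree)
    (hσK : ∀ c : K, σ (Polynomial.C c) = Polynomial.C c)
    {s t : S} (hs0 : s ≠ 0) (ht0 : t ≠ 0) : s * t ≠ 0 :=
  (mul_facts O hs hσK hs0 ht0).1

include O in
theorem mul_left_cancel_S (hs : 1 < (σ Polynomial.X).natDegree)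
    (hσK : ∀ c : K, σ (Polynomial.C c) = Polynomial.C c)
    {w p q : S} (hw : w ≠ 0) (h : w * p = w * q) : p = q := by
  by_contra hne
  have hpq : p - q ≠ 0 := sub_ne_zero_of_ne hne
  have : w * (p - q) = 0 := by rw [mul_sub, h, sub_self]
  exact mul_ne_zero_S O hs hσK hw hpq this


theorem poly_div_rep (a₀ : Polynomial K) (hd : 1 ≤ a₀.natDegree) :
    ∀ N (r : Polynomial K), r.natDegree ≤ N →
    ∃ φ : Fin a₀.natDegree → Polynomial K,
      r = ∑ i, (φ i).comp a₀ * X ^ (i : ℕ) := by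
  classical
  intro N
  induction N using Nat.strong_induction_on with
  | _ N ih =>
    intro r hr
    by_cases hr0 : r = 0
    · exact ⟨0, by simp [hr0]⟩
    · have ha₀ne : a₀ ≠ 0 := fun h => by rw [h] at hd; simp at hd
      set d := a₀.natDegree with hdd
      set N' := r.natDegree with hN'
      set i₀ := N' % d with hi₀
      set Q := N' / d with hQ
      have hi₀lt : i₀ < d := Nat.mod_lt _ (by omega)
      set μ := r.leadingCoeff / (a₀.leadingCoeff ^ Q) with hμ
      have hlca : a₀.leadingCoeff ≠ 0 := Polynomial.leadingCoeff_ne_zero.2 ha₀ne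
      have hlcr : r.leadingCoeff ≠ 0 := Polynomial.leadingCoeff_ne_zero.2 hr0
      have hμne : μ ≠ 0 := div_ne_zero hlcr (pow_ne_zero _ hlca)
      set τ : Polynomial K := Polynomial.C μ * a₀ ^ Q * X ^ i₀ with hτ
      have hτne : τ ≠ 0 := by
        apply mul_ne_zero (mul_ne_zero _ (pow_ne_zero _ ha₀ne)) (pow_ne_zero _ X_ne_zero)
        simpa using hμne
      have hτdeg : τ.natDegree = N' := by
        rw [hτ, Polynomial.natDegree_mul (mul_ne_zero (by simpa using hμne)
          (pow_ne_zero _ ha₀ne)) (pow_ne_zero _ X_ne_zero),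
          Polynomial.natDegree_mul (by simpa using hμne) (pow_ne_zero _ ha₀ne),
          Polynomial.natDegree_C, Polynomial.natDegree_pow, Polynomial.natDegree_X_pow]
        have h5 := Nat.div_add_mod N' d
        have h6 : Q * a₀.natDegree = d * (N' / d) := by rw [← hdd, hQ, Nat.mul_comm]
        omega
      have hτlc : τ.leadingCoeff = r.leadingCoeff := by
        rw [hτ, Polynomial.leadingCoeff_mul, Polynomial.leadingCoeff_mul,
          Polynomial.leadingCoeff_C, Polynomial.leadingCoeff_pow,
          Polynomial.leadingCoeff_X_pow, hμ]
        field_simp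
      set r' := r - τ with hr'
      have hdeglt : r' = 0 ∨ r'.natDegree < N' := by
        by_cases h0 : r' = 0
        · exact Or.inl h0
        · right
          have h1 : r'.natDegree ≤ N' := le_trans (Polynomial.natDegree_sub_le _ _) (by omega)
          have h2 : r'.coeff N' = 0 := by
            rw [hr', Polynomial.coeff_sub]
            have e1 : r.coeff N' = r.leadingCoeff := rfl
            have e2 : τ.coeff N' = τ.leadingCoeff := by
              rw [Polynomial.leadingCoeff, hτdeg]
            rw [e1, e2, hτlc, sub_self]
          rcases lt_or_eq_of_le h1 with h | h
          · exact h
          · exfalso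
            have := Polynomial.leadingCoeff_ne_zero.2 h0
            rw [Polynomial.leadingCoeff, h] at this
            exact this h2
      have hrec : ∃ φ : Fin d → Polynomial K,
          r' = ∑ i, (φ i).comp a₀ * X ^ (i : ℕ) := by
        rcases hdeglt with h0 | hlt
        · exact ⟨0, by simp [h0]⟩
        · have hN'N : N' ≤ N := by omega
          exact ih r'.natDegree (by omega) r' (le_refl _)
      obtain ⟨φ', hφ'⟩ := hrec
      set i₀' : Fin d := ⟨i₀, hi₀lt⟩ with hi₀'
      refine ⟨fun i => φ' i + if i = i₀' then Polynomial.C μ * X ^ Q else 0, ?_⟩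
      have hsum : ∀ i : Fin d,
          ((φ' i + if i = i₀' then Polynomial.C μ * X ^ Q else 0).comp a₀) * X ^ (i:ℕ)
          = (φ' i).comp a₀ * X ^ (i:ℕ) + (if i = i₀' then τ else 0) := by
        intro i
        by_cases hii : i = i₀'
        · rw [if_pos hii, if_pos hii, Polynomial.add_comp, add_mul]
          congr 1
          rw [Polynomial.mul_comp, Polynomial.C_comp, Polynomial.X_pow_comp, hτ, hii]
        · rw [if_neg hii, if_neg hii, add_zero, add_zero]
      calc r = r' + τ := by rw [hr']; ring
      _ = (∑ i, (φ' i).comp a₀ * X ^ (i:ℕ)) + ∑ i, (if i = i₀' then τ else 0) := by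
        rw [← hφ']
        congr 1
        rw [Finset.sum_ite_eq' Finset.univ i₀' (fun _ => τ), if_pos (Finset.mem_univ _)]
      _ = ∑ i, ((fun i => φ' i + if i = i₀' then Polynomial.C μ * X ^ Q else 0) i).comp a₀
            * X ^ (i:ℕ) := by
        rw [← Finset.sum_add_distrib]
        exact (Finset.sum_congr rfl fun i _ => (hsum i)).symm

theorem poly_div_unique (a₀ : Polynomial K) (hd : 1 ≤ a₀.natDegree)
    (φ : Fin a₀.natDegree → Polynomial K)
    (h : ∑ i, (φ i).comp a₀ * X ^ (i : ℕ) = 0) : ∀ i, φ i = 0 := by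
  classical
  by_contra hcon
  push_neg at hcon
  obtain ⟨j, hj⟩ := hcon
  have ha₀ne : a₀ ≠ 0 := fun h => by rw [h] at hd; simp at hd
  set F : Finset (Fin a₀.natDegree) := Finset.univ.filter (fun i => φ i ≠ 0) with hF
  have hFne : F.Nonempty := ⟨j, by simp [hF, hj]⟩
  set Dfun : Fin a₀.natDegree → ℕ := fun i => a₀.natDegree * (φ i).natDegree + (i : ℕ) with hDfun
  obtain ⟨i', hi'F, hi'max⟩ := Finset.exists_max_image F Dfun hFne
  have hterm : ∀ i ∈ F, ((φ i).comp a₀ * X ^ (i:ℕ)).natDegree = Dfun i ∧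
      ((φ i).comp a₀ * X ^ (i:ℕ)).coeff (Dfun i)
        = ((φ i).comp a₀ * X ^ (i:ℕ)).leadingCoeff ∧
      ((φ i).comp a₀ * X ^ (i:ℕ)).leadingCoeff ≠ 0 := by
    intro i hiF
    have hφi : φ i ≠ 0 := by
      have := Finset.mem_filter.1 hiF
      exact this.2
    have hcompne : (φ i).comp a₀ ≠ 0 := by
      intro h0
      have hlc := Polynomial.leadingCoeff_comp (p := φ i) (q := a₀) (by omega)
      rw [h0, Polynomial.leadingCoeff_zero] at hlc
      exact (mul_ne_zero (Polynomial.leadingCoeff_ne_zero.2 hφi)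
        (pow_ne_zero _ (Polynomial.leadingCoeff_ne_zero.2 ha₀ne))) hlc.symm
    have htne : (φ i).comp a₀ * X ^ (i:ℕ) ≠ 0 :=
      mul_ne_zero hcompne (pow_ne_zero _ X_ne_zero)
    have hdeg : ((φ i).comp a₀ * X ^ (i:ℕ)).natDegree = Dfun i := by
      rw [Polynomial.natDegree_mul hcompne (pow_ne_zero _ X_ne_zero),
        Polynomial.natDegree_comp, Polynomial.natDegree_X_pow, hDfun]
      ring_nf
    exact ⟨hdeg, by rw [Polynomial.leadingCoeff, hdeg],
      Polynomial.leadingCoeff_ne_zero.2 htne⟩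
  have hcoeff0 := congrArg (fun p => Polynomial.coeff p (Dfun i')) h
  simp only [Polynomial.finset_sum_coeff, Polynomial.coeff_zero] at hcoeff0
  have hsplit : ∀ i : Fin a₀.natDegree,
      ((φ i).comp a₀ * X ^ (i:ℕ)).coeff (Dfun i')
      = if i = i' then ((φ i').comp a₀ * X ^ ((i':ℕ))).leadingCoeff else 0 := by
    intro i
    by_cases hii : i = i'
    · rw [if_pos hii, hii]
      exact (hterm i' hi'F).2.1
    · rw [if_neg hii]
      by_cases hiF : i ∈ F
      · have h1 := (hterm i hiF).1
        have hne : Dfun i ≠ Dfun i' := by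
          intro heq
          apply hii
          have : (Dfun i) % a₀.natDegree = (i:ℕ) := by
            rw [hDfun]
            simp [Nat.mul_add_mod, Nat.mod_eq_of_lt i.isLt]
          have h2 : (Dfun i') % a₀.natDegree = ((i':ℕ)) := by
            rw [hDfun]
            simp [Nat.mul_add_mod, Nat.mod_eq_of_lt i'.isLt]
          apply Fin.ext
          rw [← this, ← h2, heq]
        have hlt : Dfun i < Dfun i' := lt_of_le_of_ne (hi'max i hiF) hne
        apply Polynomial.coeff_eq_zero_of_natDegree_lt
        rw [h1]; exact hlt
      · have : φ i = 0 := by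
          by_contra h0
          exact hiF (Finset.mem_filter.2 ⟨Finset.mem_univ _, h0⟩)
        rw [this]
        simp
  rw [Finset.sum_congr rfl (fun i _ => hsplit i)] at hcoeff0
  simp only [Finset.sum_ite_eq', Finset.mem_univ, if_true] at hcoeff0
  exact (hterm i' hi'F).2.2 hcoeff0


theorem comp_eq_eval₂' (ψ q : Polynomial K) : ψ.comp q = Polynomial.eval₂ Polynomial.C q ψ :=
  rfl

theorem main_case0 (hs : 1 < (σ Polynomial.X).natDegree)
    (hσK : ∀ c : K, σ (Polynomial.C c) = Polynomial.C c)
    (hδK : ∀ c : K, δ (Polynomial.C c) = 0)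
    (a : S) (ha : ∀ c : K, a ≠ O.ι (Polynomial.C c)) (hn : dS O a = 0) :
    (∀ u v : S, u * a = a * u → v * a = a * v → u * v = v * u) ∧
    ∃ (k : ℕ) (bas : Fin k → S),
      (∀ i, bas i * a = a * bas i) ∧
      (∀ c : S, c * a = a * c → ∃ φ : Fin k → Polynomial K,
        c = ∑ i, Polynomial.eval₂ (O.ι.comp Polynomial.C) a (φ i) * bas i) ∧
      (∀ φ : Fin k → Polynomial K,
        ∑ i, Polynomial.eval₂ (O.ι.comp Polynomial.C) a (φ i) * bas i = 0 →
          ∀ i, φ i = 0) := by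
  classical
  set a₀ := (O.rep a).coeff 0 with ha₀
  have hrepa : O.rep a = Polynomial.C a₀ := Polynomial.eq_C_of_natDegree_eq_zero hn
  have haι : a = O.ι a₀ := by
    have h1 := congrArg O.rep.symm hrepa
    rw [AddEquiv.symm_apply_apply, ← Polynomial.monomial_zero_left, rep_symm_monomial] at h1
    simpa using h1
  have hd : 1 ≤ a₀.natDegree := by
    by_contra h
    push_neg at h
    obtain ⟨c, hc⟩ := Polynomial.natDegree_eq_zero.1 (show a₀.natDegree = 0 by omega)
    exact ha c (by rw [haι, ← hc])
  have ha0 : a ≠ 0 := by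
    intro h
    rw [h, map_zero] at hrepa
    have hz : a₀ = 0 := Polynomial.C_eq_zero.1 hrepa.symm
    rw [hz] at hd
    simp at hd
  have hlSa : lS O a = a₀ := by rw [lS, hrepa, Polynomial.leadingCoeff_C]
  -- every centralizing element is of the form ι u₀
  have centElt : ∀ u : S, u * a = a * u → ∃ u₀ : Polynomial K, u = O.ι u₀ := by
    intro u hcomm
    by_cases hu : u = 0
    · exact ⟨0, by rw [hu, map_zero]⟩
    · have e := lc_rel O hs hσK ha0 hu hcomm
      rw [hn, hlSa] at e
      simp only [Function.iterate_zero, id_eq] at e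
      -- e : lS u * σ^[du] a₀ = a₀ * lS u
      have hU : lS O u ≠ 0 := lS_ne_zero O hu
      have hσa₀ : (⇑σ)^[dS O u] a₀ ≠ 0 :=
        sigma_iter_ne_zero σ hs hσK _ (fun h => by rw [h] at hd; simp at hd)
      have hdeq := congrArg Polynomial.natDegree e
      rw [Polynomial.natDegree_mul hU hσa₀, Polynomial.natDegree_mul
        (fun h => by rw [h] at hd; simp at hd) hU,
        sigma_iter_natDegree σ hσK] at hdeq
      have hdu : dS O u = 0 := by
        by_contra hduu
        have h1 : 1 ≤ dS O u := by omega
        have h2 : 2 ≤ (σ X).natDegree ^ (dS O u) := by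
          calc 2 = 2^1 := rfl
          _ ≤ 2 ^ (dS O u) := Nat.pow_le_pow_right (by norm_num) h1
          _ ≤ (σ X).natDegree ^ (dS O u) := Nat.pow_le_pow_left hs _
        nlinarith
      refine ⟨(O.rep u).coeff 0, ?_⟩
      have h3 := Polynomial.eq_C_of_natDegree_eq_zero (p := O.rep u) hdu
      have h4 := congrArg O.rep.symm h3
      rw [AddEquiv.symm_apply_apply, ← Polynomial.monomial_zero_left, rep_symm_monomial] at h4
      simpa using h4
  have evconv : ∀ ψ : Polynomial K,
      Polynomial.eval₂ (O.ι.comp Polynomial.C) a ψ = O.ι (ψ.comp a₀) := by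
    intro ψ
    rw [comp_eq_eval₂', Polynomial.hom_eval₂, haι]
  constructor
  · intro u v hu hv
    obtain ⟨u₀, rfl⟩ := centElt u hu
    obtain ⟨v₀, rfl⟩ := centElt v hv
    rw [← map_mul, ← map_mul, mul_comm]
  · refine ⟨a₀.natDegree, fun i => O.ι (X ^ (i:ℕ)), ?_, ?_, ?_⟩
    · intro i
      rw [haι, ← map_mul, ← map_mul, mul_comm]
    · intro c hc
      obtain ⟨c₀, rfl⟩ := centElt c hc
      obtain ⟨φ, hφ⟩ := poly_div_rep a₀ hd c₀.natDegree c₀ le_rfl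
      refine ⟨φ, ?_⟩
      rw [hφ, map_sum]
      refine Finset.sum_congr rfl fun i _ => ?_
      rw [map_mul, evconv]
    · intro φ hsum i
      have h1 : O.ι (∑ i, (φ i).comp a₀ * X ^ (i:ℕ)) = 0 := by
        rw [map_sum, ← hsum]
        refine Finset.sum_congr rfl fun i _ => ?_
        rw [map_mul, evconv]
      have h2 : (∑ i, (φ i).comp a₀ * X ^ (i:ℕ)) = 0 := by
        apply iota_injective O
        rw [h1, map_zero]
      exact poly_div_unique a₀ hd φ h2 i


theorem indep_lemma (hs : 1 < (σ Polynomial.X).natDegree)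
    (hσK : ∀ c : K, σ (Polynomial.C c) = Polynomial.C c)
    {a : S} (hn : 1 ≤ dS O a) {k : ℕ} (w : Fin k → S)
    (hw : ∀ i, w i ≠ 0)
    (hdist : ∀ i j : Fin k, ((dS O (w i) : ZMod (dS O a)) = (dS O (w j) : ZMod (dS O a))) → i = j)
    (φ : Fin k → Polynomial K)
    (hsumzero : ∑ i, Polynomial.eval₂ (O.ι.comp Polynomial.C) a (φ i) * w i = 0) :
    ∀ i, φ i = 0 := by
  classical
  by_contra hcon
  push_neg at hcon
  obtain ⟨j0, hj0⟩ := hcon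
  set n := dS O a with hnn
  set F : Finset (Fin k) := Finset.univ.filter (fun i => φ i ≠ 0) with hF
  have hFne : F.Nonempty := ⟨j0, by simp [hF, hj0]⟩
  set Dfun : Fin k → ℕ := fun i => n * (φ i).natDegree + dS O (w i) with hDfun
  obtain ⟨i', hi'F, hi'max⟩ := Finset.exists_max_image F Dfun hFne
  set u : Fin k → S := fun i => Polynomial.eval₂ (O.ι.comp Polynomial.C) a (φ i) * w i with hu
  have hterm : ∀ i ∈ F, u i ≠ 0 ∧ dS O (u i) = Dfun i := by
    intro i hiF
    have hφi : φ i ≠ 0 := (Finset.mem_filter.1 hiF).2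
    obtain ⟨hEvne, hEvdeg⟩ := Ev_facts O hs hσK hn hφi
    obtain ⟨hne, hdeg, _⟩ := mul_facts O hs hσK hEvne (hw i)
    exact ⟨hne, by rw [hu, hdeg, hEvdeg]⟩
  have hDinj : ∀ i ∈ F, i ≠ i' → Dfun i < Dfun i' := by
    intro i hiF hii
    rcases lt_or_eq_of_le (hi'max i hiF) with h | h
    · exact h
    · exfalso
      apply hii
      apply hdist
      have hc : ((Dfun i : ZMod n)) = ((Dfun i' : ZMod n)) := by rw [h]
      rw [hDfun] at hc
      push_cast at hc
      have hz : ((n : ZMod n)) = 0 := ZMod.natCast_self n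
      rw [hz] at hc
      simpa using hc
  have hcoeff0 := congrArg (fun p => Polynomial.coeff p (Dfun i')) (congrArg O.rep hsumzero)
  rw [map_sum] at hcoeff0
  simp only [Polynomial.finset_sum_coeff, map_zero, Polynomial.coeff_zero] at hcoeff0
  have hsplit : ∀ i : Fin k,
      (O.rep (u i)).coeff (Dfun i') = if i = i' then lS O (u i') else 0 := by
    intro i
    by_cases hii : i = i'
    · rw [if_pos hii, hii, lS, Polynomial.leadingCoeff, ← dS, (hterm i' hi'F).2]
    · rw [if_neg hii]
      by_cases hiF : i ∈ F
      · apply Polynomial.coeff_eq_zero_of_natDegree_lt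
        have h1 : dS O (u i) = (O.rep (u i)).natDegree := rfl
        have := hDinj i hiF hii
        rw [← h1, (hterm i hiF).2]
        exact this
      · have hφ0 : φ i = 0 := by
          by_contra h0
          exact hiF (Finset.mem_filter.2 ⟨Finset.mem_univ _, h0⟩)
        rw [hu]
        simp [hφ0]
  rw [Finset.sum_congr rfl (fun i _ => hsplit i)] at hcoeff0
  simp only [Finset.sum_ite_eq', Finset.mem_univ, if_true] at hcoeff0
  exact lS_ne_zero O (hterm i' hi'F).1 hcoeff0


theorem cent_mul {a u v : S} (hu : u * a = a * u) (hv : v * a = a * v) :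
    (u * v) * a = a * (u * v) := by
  rw [mul_assoc, hv, ← mul_assoc, hu, mul_assoc]

theorem cent_scalar_mul (hσK : ∀ c : K, σ (Polynomial.C c) = Polynomial.C c)
    (hδK : ∀ c : K, δ (Polynomial.C c) = 0)
    {a v : S} (lam : K) (hv : v * a = a * v) :
    (O.ι (Polynomial.C lam) * v) * a = a * (O.ι (Polynomial.C lam) * v) := by
  rw [mul_assoc, hv, ← mul_assoc, iota_C_central O hσK hδK, mul_assoc]

theorem cent_pow {a u : S} (hu : u * a = a * u) (q : ℕ) : (u ^ q) * a = a * (u ^ q) := by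
  induction q with
  | zero => simp
  | succ q ih => rw [pow_succ, mul_assoc, hu, ← mul_assoc, ih, mul_assoc]

theorem descent (hs : 1 < (σ Polynomial.X).natDegree)
    (hσK : ∀ c : K, σ (Polynomial.C c) = Polynomial.C c)
    (hδK : ∀ c : K, δ (Polynomial.C c) = 0)
    {a : S} (hn : 1 ≤ dS O a) {k : ℕ} (bas : Fin k → S)
    (hbasC : ∀ i, bas i * a = a * bas i) (hbas0 : ∀ i, bas i ≠ 0)
    (hmin : ∀ (i : Fin k) (p : ℕ), (∃ u : S, u * a = a * u ∧ u ≠ 0 ∧ dS O u = p ∧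
        ((p : ZMod (dS O a)) = (dS O (bas i) : ZMod (dS O a)))) → dS O (bas i) ≤ p)
    (hcover : ∀ u : S, u * a = a * u → u ≠ 0 → ∃ i : Fin k,
        ((dS O u : ZMod (dS O a)) = (dS O (bas i) : ZMod (dS O a)))) :
    ∀ c : S, c * a = a * c → ∃ φ : Fin k → Polynomial K,
      c = ∑ i, Polynomial.eval₂ (O.ι.comp Polynomial.C) a (φ i) * bas i := by
  classical
  have ha0 : a ≠ 0 := dS_pos_ne_zero O hn
  set n := dS O a with hnn
  suffices H : ∀ P : ℕ, ∀ c : S, c * a = a * c → dS O c ≤ P →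
      ∃ φ : Fin k → Polynomial K,
        c = ∑ i, Polynomial.eval₂ (O.ι.comp Polynomial.C) a (φ i) * bas i by
    intro c hc
    exact H (dS O c) c hc le_rfl
  intro P
  induction P using Nat.strong_induction_on with
  | _ P ih =>
    intro c hcC hcP
    by_cases hc0 : c = 0
    · exact ⟨0, by simp [hc0]⟩
    · set p := dS O c with hp
      obtain ⟨i, hi⟩ := hcover c hcC hc0
      set mt := dS O (bas i) with hmt
      have hle : mt ≤ p := hmin i p ⟨c, hcC, hc0, rfl, hi⟩
      have hmod : mt ≡ p [MOD n] := by
        have := (ZMod.natCast_eq_natCast_iff _ _ _).1 hi.symm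
        exact this.symm.symm
      have hdvd : n ∣ p - mt := (Nat.modEq_iff_dvd' hle).1 hmod
      obtain ⟨q, hq⟩ := hdvd
      have hqp : q * n + mt = p := by rw [Nat.mul_comm]; omega
      set v := a ^ q * bas i with hv
      have hvC : v * a = a * v := cent_mul (cent_pow rfl q) (hbasC i)
      have hapq := a_pow_facts O hs hσK ha0 q
      have hv0 : v ≠ 0 := mul_ne_zero_S O hs hσK hapq.1 (hbas0 i)
      have hdv : dS O v = p := by
        have := (mul_facts O hs hσK hapq.1 (hbas0 i)).2.1
        rw [hv, this, hapq.2, ← hmt, ← hnn]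
        exact hqp
      obtain ⟨lam, hlam⟩ := same_deg_prop O hs hσK hn hc0 hv0 hcC hvC (by rw [hdv])
      set c' := c - O.ι (Polynomial.C lam) * v with hc'
      have hc'C : c' * a = a * c' := by
        rw [hc', sub_mul, mul_sub, hcC, cent_scalar_mul O hσK hδK lam hvC]
      have hrepc' : O.rep c' = O.rep c - Polynomial.C (Polynomial.C lam) * O.rep v := by
        rw [hc', map_sub, rep_iota_mul]
      have hbound : (O.rep c').natDegree ≤ p := by
        rw [hrepc']
        apply le_trans (Polynomial.natDegree_sub_le _ _)
        apply max_le
        · exact le_of_eq rfl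
        · apply le_trans (Polynomial.natDegree_C_mul_le _ _)
          rw [← dS, hdv]
      have hcoeffp : (O.rep c').coeff p = 0 := by
        rw [hrepc', Polynomial.coeff_sub, Polynomial.coeff_C_mul]
        have e1 : (O.rep c).coeff p = lS O c := by
          rw [lS, Polynomial.leadingCoeff, ← dS]
        have e2 : (O.rep v).coeff p = lS O v := by
          rw [lS, Polynomial.leadingCoeff, ← dS, hdv]
        rw [e1, e2, hlam]
        ring
      have hc'cases : c' = 0 ∨ dS O c' < p := by
        by_cases h0 : c' = 0
        · exact Or.inl h0
        · right
          rcases lt_or_eq_of_le hbound with h | h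
          · exact h
          · exfalso
            have hlc := lS_ne_zero O h0
            rw [lS, Polynomial.leadingCoeff, ← dS] at hlc
            rw [show dS O c' = (O.rep c').natDegree from rfl, h] at hlc
            exact hlc hcoeffp
      have hrec : ∃ φ' : Fin k → Polynomial K,
          c' = ∑ i, Polynomial.eval₂ (O.ι.comp Polynomial.C) a (φ' i) * bas i := by
        rcases hc'cases with h0 | hlt
        · exact ⟨0, by simp [h0]⟩
        · by_cases hP : p = 0
          · omega
          · exact ih (dS O c') (by omega) c' hc'C le_rfl
      obtain ⟨φ', hφ'⟩ := hrec
      refine ⟨fun i' => φ' i' + if i' = i then Polynomial.monomial q lam else 0, ?_⟩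
      have hcsplit : c = c' + O.ι (Polynomial.C lam) * v := by rw [hc']; abel
      rw [hcsplit, hφ']
      have hterm : ∀ i' : Fin k,
          Polynomial.eval₂ (O.ι.comp Polynomial.C) a
              (φ' i' + if i' = i then Polynomial.monomial q lam else 0) * bas i'
          = Polynomial.eval₂ (O.ι.comp Polynomial.C) a (φ' i') * bas i'
            + (if i' = i then O.ι (Polynomial.C lam) * v else 0) := by
        intro i'
        rw [Polynomial.eval₂_add, add_mul]
        congr 1
        by_cases hii : i' = i
        · rw [if_pos hii, if_pos hii, Polynomial.eval₂_monomial, hii, hv]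
          show (O.ι (Polynomial.C lam)) * a ^ q * bas i = _
          rw [mul_assoc]
        · rw [if_neg hii, if_neg hii, Polynomial.eval₂_zero, zero_mul]
      rw [Finset.sum_congr rfl (fun i' _ => hterm i'), Finset.sum_add_distrib]
      congr 1
      rw [Finset.sum_ite_eq' Finset.univ i (fun _ => O.ι (Polynomial.C lam) * v),
        if_pos (Finset.mem_univ _)]


theorem main_case1 (hs : 1 < (σ Polynomial.X).natDegree)
    (hσK : ∀ c : K, σ (Polynomial.C c) = Polynomial.C c)
    (hδK : ∀ c : K, δ (Polynomial.C c) = 0)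
    (a : S) (hn : 1 ≤ dS O a) :
    (∀ u v : S, u * a = a * u → v * a = a * v → u * v = v * u) ∧
    ∃ (k : ℕ) (bas : Fin k → S),
      (∀ i, bas i * a = a * bas i) ∧
      (∀ c : S, c * a = a * c → ∃ φ : Fin k → Polynomial K,
        c = ∑ i, Polynomial.eval₂ (O.ι.comp Polynomial.C) a (φ i) * bas i) ∧
      (∀ φ : Fin k → Polynomial K,
        ∑ i, Polynomial.eval₂ (O.ι.comp Polynomial.C) a (φ i) * bas i = 0 →
          ∀ i, φ i = 0) := by
  classical
  have ha0 : a ≠ 0 := dS_pos_ne_zero O hn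
  haveI : NeZero (dS O a) := ⟨by omega⟩
  have hCent1 : (1:S) * a = a * (1:S) := by rw [one_mul, mul_one]
  have h1ne : (1:S) ≠ 0 := by
    have := (a_pow_facts O hs hσK ha0 0).1; rwa [pow_zero] at this
  have hdS1 : dS O (1:S) = 0 := by
    have := (a_pow_facts O hs hσK ha0 0).2; rwa [pow_zero, Nat.zero_mul] at this
  -- the subgroup of realized residues
  set T : AddSubgroup (ZMod (dS O a)) :=
    { carrier := {t | ∃ u : S, u * a = a * u ∧ u ≠ 0 ∧ ((dS O u : ZMod (dS O a))) = t}
      zero_mem' := ⟨1, hCent1, h1ne, by rw [hdS1]; exact Nat.cast_zero⟩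
      add_mem' := by
        rintro t1 t2 ⟨u, hu, hu0, hut⟩ ⟨v, hv, hv0, hvt⟩
        refine ⟨u * v, cent_mul hu hv, mul_ne_zero_S O hs hσK hu0 hv0, ?_⟩
        rw [(mul_facts O hs hσK hu0 hv0).2.1]
        push_cast
        rw [hut, hvt]
      neg_mem' := by
        rintro t ⟨u, hu, hu0, hut⟩
        set o := addOrderOf t with ho
        have hopos : 0 < o := addOrderOf_pos t
        refine ⟨u ^ (o - 1), cent_pow hu _, (a_pow_facts O hs hσK hu0 (o-1)).1, ?_⟩
        rw [(a_pow_facts O hs hσK hu0 (o-1)).2]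
        push_cast
        rw [hut]
        have hot : ((o : ℕ) : ZMod (dS O a)) * t = 0 := by
          rw [← nsmul_eq_mul]
          exact addOrderOf_nsmul_eq_zero t
        have hcast : ((o - 1 : ℕ) : ZMod (dS O a)) = ((o : ℕ) : ZMod (dS O a)) - 1 := by
          rw [Nat.cast_sub hopos, Nat.cast_one]
        rw [hcast]
        linear_combination hot } with hT
  obtain ⟨g, hg⟩ := IsAddCyclic.exists_generator (α := T)
  obtain ⟨b, hbC, hb0, hbt⟩ := g.2
  -- minimal-degree witnesses per class
  have hexists : ∀ τ : T, ∃ p : ℕ, ∃ u : S, u * a = a * u ∧ u ≠ 0 ∧ dS O u = p ∧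
      ((p : ZMod (dS O a))) = τ.val := by
    rintro ⟨t, u, hu, hu0, hut⟩
    exact ⟨dS O u, u, hu, hu0, rfl, hut⟩
  set mdeg : T → ℕ := fun τ => Nat.find (hexists τ) with hmdeg
  have hwit : ∀ τ : T, ∃ u : S, u * a = a * u ∧ u ≠ 0 ∧ dS O u = mdeg τ ∧
      ((mdeg τ : ZMod (dS O a))) = τ.val := fun τ => Nat.find_spec (hexists τ)
  set wit : T → S := fun τ => Classical.choose (hwit τ) with hwitdef
  have hwitP : ∀ τ : T, wit τ * a = a * wit τ ∧ wit τ ≠ 0 ∧ dS O (wit τ) = mdeg τ ∧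
      ((mdeg τ : ZMod (dS O a))) = τ.val := fun τ => Classical.choose_spec (hwit τ)
  have hwitmin : ∀ (τ : T) (p : ℕ), (∃ u : S, u * a = a * u ∧ u ≠ 0 ∧ dS O u = p ∧
      ((p : ZMod (dS O a))) = τ.val) → mdeg τ ≤ p :=
    fun τ p hp => Nat.find_min' (hexists τ) hp
  set k := Fintype.card T with hk
  set e : Fin k → T := fun i => (Fintype.equivFin T).symm i with he
  have heinj : Function.Injective e := (Fintype.equivFin T).symm.injective
  set bas : Fin k → S := fun i => wit (e i) with hbas
  have hbasC : ∀ i, bas i * a = a * bas i := fun i => (hwitP (e i)).1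
  have hbas0 : ∀ i, bas i ≠ 0 := fun i => (hwitP (e i)).2.1
  have hbascls : ∀ i, ((dS O (bas i) : ZMod (dS O a))) = (e i).val := by
    intro i
    rw [hbas, (hwitP (e i)).2.2.1, (hwitP (e i)).2.2.2]
  have hmin : ∀ (i : Fin k) (p : ℕ), (∃ u : S, u * a = a * u ∧ u ≠ 0 ∧ dS O u = p ∧
      ((p : ZMod (dS O a)) = (dS O (bas i) : ZMod (dS O a)))) → dS O (bas i) ≤ p := by
    intro i p ⟨u, hu, hu0, hup, hcl⟩
    have h1 : dS O (bas i) = mdeg (e i) := (hwitP (e i)).2.2.1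
    rw [h1]
    apply hwitmin (e i) p
    exact ⟨u, hu, hu0, hup, by rw [hcl, hbascls i]⟩
  have hcover : ∀ u : S, u * a = a * u → u ≠ 0 → ∃ i : Fin k,
      ((dS O u : ZMod (dS O a)) = (dS O (bas i) : ZMod (dS O a))) := by
    intro u hu hu0
    have hmem : ((dS O u : ZMod (dS O a))) ∈ T := ⟨u, hu, hu0, rfl⟩
    refine ⟨(Fintype.equivFin T) ⟨_, hmem⟩, ?_⟩
    rw [hbascls]
    have h2 : e ((Fintype.equivFin ↥T) ⟨_, hmem⟩) = ⟨_, hmem⟩ := Equiv.symm_apply_apply _ _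
    rw [h2]
  have hrep := descent O hs hσK hδK hn bas hbasC hbas0 hmin hcover
  have hindep : ∀ φ : Fin k → Polynomial K,
      ∑ i, Polynomial.eval₂ (O.ι.comp Polynomial.C) a (φ i) * bas i = 0 →
        ∀ i, φ i = 0 := by
    intro φ hφ
    apply indep_lemma O hs hσK hn bas hbas0 ?_ φ hφ
    intro i j hij
    apply heinj
    apply Subtype.ext
    rw [← hbascls i, ← hbascls j, hij]
  refine ⟨?_, k, bas, hbasC, hrep, hindep⟩
  -- === commutativity ===
  intro u v huC hvC
  set EvH : Polynomial K →+* S :=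
    Polynomial.eval₂RingHom' (O.ι.comp Polynomial.C) a
      (fun c => iota_C_central O hσK hδK c a) with hEvHdef
  have hEvH : ∀ p : Polynomial K, Polynomial.eval₂ (O.ι.comp Polynomial.C) a p = EvH p :=
    fun _ => rfl
  have hG0 : ∀ j : Fin k, ∃ φ : Fin k → Polynomial K,
      b ^ (j:ℕ) = ∑ i, Polynomial.eval₂ (O.ι.comp Polynomial.C) a (φ i) * bas i :=
    fun j => hrep (b ^ (j:ℕ)) (cent_pow hbC (j:ℕ))
  choose G hG using hG0
  -- order of the generator
  have hord : addOrderOf g = k := by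
    have hgtop : AddSubgroup.zmultiples g = (⊤ : AddSubgroup T) := by
      rw [AddSubgroup.eq_top_iff']
      exact hg
    have h1 := Nat.card_zmultiples g
    rw [hgtop] at h1
    rw [← h1, hk, AddSubgroup.card_top, Nat.card_eq_fintype_card]
  -- classes of powers of b
  have hbpow : ∀ j : ℕ, b ^ j ≠ 0 ∧ dS O (b ^ j) = j * dS O b :=
    fun j => a_pow_facts O hs hσK hb0 j
  have hbcls : ∀ j : ℕ, ((dS O (b ^ j) : ZMod (dS O a))) = ((j • g : T) : ZMod (dS O a)) := by
    intro j
    rw [(hbpow j).2, AddSubgroup.coe_nsmul]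
    push_cast
    rw [hbt, nsmul_eq_mul]
  have hbdist : ∀ j1 j2 : Fin k,
      ((dS O (b ^ (j1:ℕ)) : ZMod (dS O a))) = ((dS O (b ^ (j2:ℕ)) : ZMod (dS O a))) → j1 = j2 := by
    intro j1 j2 h
    rw [hbcls, hbcls] at h
    have h2 : ((j1:ℕ) • g : T) = ((j2:ℕ) • g : T) := Subtype.ext h
    by_contra hne
    rcases Nat.lt_or_ge (j1:ℕ) (j2:ℕ) with hlt | hge
    · have h3 : ((j2:ℕ) - (j1:ℕ)) • g = 0 := by
        rw [sub_nsmul g (le_of_lt hlt), h2]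
        simp
      have h4 : addOrderOf g ∣ (j2:ℕ) - (j1:ℕ) := addOrderOf_dvd_iff_nsmul_eq_zero.2 h3
      rw [hord] at h4
      have h5 := Nat.le_of_dvd (by omega) h4
      omega
    · have hlt2 : (j2:ℕ) < (j1:ℕ) := by
        rcases Nat.lt_or_ge (j2:ℕ) (j1:ℕ) with h' | h'
        · exact h'
        · exfalso; apply hne; apply Fin.ext; omega
      have h3 : ((j1:ℕ) - (j2:ℕ)) • g = 0 := by
        rw [sub_nsmul g (le_of_lt hlt2), ← h2]
        simp
      have h4 : addOrderOf g ∣ (j1:ℕ) - (j2:ℕ) := addOrderOf_dvd_iff_nsmul_eq_zero.2 h3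
      rw [hord] at h4
      have h5 := Nat.le_of_dvd (by omega) h4
      omega
  have hbindep : ∀ c : Fin k → Polynomial K,
      (∑ j, Polynomial.eval₂ (O.ι.comp Polynomial.C) a (c j) * b ^ ((j : Fin k):ℕ)) = 0 →
      ∀ j, c j = 0 := by
    intro c hzero
    exact indep_lemma O hs hσK hn (fun j : Fin k => b ^ (j:ℕ))
      (fun j => (hbpow (j:ℕ)).1) hbdist c hzero
  -- the change-of-basis matrix and its determinant
  set Gm : Matrix (Fin k) (Fin k) (Polynomial K) := Matrix.of (fun j i => G j i) with hGm
  have hGmapply : ∀ j i, Gm j i = G j i := fun j i => rfl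
  have hdet : Gm.det ≠ 0 := by
    intro hdet
    obtain ⟨vv, hvv0, hvmul⟩ := Matrix.exists_vecMul_eq_zero_iff.2 hdet
    have hzero : (∑ j, Polynomial.eval₂ (O.ι.comp Polynomial.C) a (vv j) * b ^ ((j : Fin k):ℕ)) = 0 := by
      have e1 : ∀ j : Fin k,
          Polynomial.eval₂ (O.ι.comp Polynomial.C) a (vv j) * b ^ ((j : Fin k):ℕ)
          = ∑ i, EvH (vv j * G j i) * bas i := by
        intro j
        rw [hEvH, hG j, Finset.mul_sum]
        refine Finset.sum_congr rfl fun i _ => ?_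
        rw [hEvH, ← mul_assoc, ← map_mul]
      rw [Finset.sum_congr rfl fun j _ => e1 j, Finset.sum_comm]
      have e2 : ∀ i : Fin k, (∑ j, EvH (vv j * G j i) * bas i) = 0 := by
        intro i
        rw [← Finset.sum_mul, ← map_sum]
        have e3 : (∑ j, vv j * G j i) = 0 := by
          have := congrFun hvmul i
          rw [Matrix.vecMul, dotProduct] at this
          exact this
        rw [e3, map_zero, zero_mul]
      rw [Finset.sum_congr rfl fun i _ => e2 i, Finset.sum_const_zero]
    have hv0 := hbindep vv hzero
    apply hvv0
    funext j
    exact hv0 j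
  set Th : S := EvH Gm.det with hTh
  have hTh0 : Th ≠ 0 := by
    have := (Ev_facts O hs hσK hn (θ := Gm.det) hdet).1
    rw [hEvH] at this
    exact this
  -- key identity: Th * bas i lies in the span of powers of b
  have hkey : ∀ i : Fin k, Th * bas i = ∑ j, EvH (Gm.adjugate i j) * b ^ ((j : Fin k):ℕ) := by
    intro i
    have e1 : ∀ j : Fin k, EvH (Gm.adjugate i j) * b ^ ((j : Fin k):ℕ)
        = ∑ l, EvH (Gm.adjugate i j * G j l) * bas l := by
      intro j
      rw [hG j, Finset.mul_sum]
      refine Finset.sum_congr rfl fun l _ => ?_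
      rw [hEvH, ← mul_assoc, ← map_mul]
    rw [Finset.sum_congr rfl fun j _ => e1 j, Finset.sum_comm]
    have e2 : ∀ l : Fin k, (∑ j, EvH (Gm.adjugate i j * G j l) * bas l)
        = (if l = i then Th * bas l else 0) := by
      intro l
      rw [← Finset.sum_mul, ← map_sum]
      have e3 : (∑ j, Gm.adjugate i j * G j l) = (Gm.adjugate * Gm) i l := by
        rw [Matrix.mul_apply]
        rfl
      rw [e3, Matrix.adjugate_mul]
      by_cases hli : l = i
      · rw [if_pos hli, hli]
        rw [Matrix.smul_apply, Matrix.one_apply, if_pos rfl, smul_eq_mul, mul_one, hTh]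
      · rw [if_neg hli]
        have : (Gm.det • (1 : Matrix (Fin k) (Fin k) (Polynomial K))) i l = 0 := by
          rw [Matrix.smul_apply, Matrix.one_apply, if_neg (fun h => hli h.symm), smul_eq_mul,
            mul_zero]
        rw [this, map_zero, zero_mul]
    rw [Finset.sum_congr rfl fun l _ => e2 l, Finset.sum_ite_eq' Finset.univ i
      (fun l => Th * bas l), if_pos (Finset.mem_univ _)]
  -- expansions of u and v
  obtain ⟨fu, hfu⟩ := hrep u huC
  obtain ⟨fv, hfv⟩ := hrep v hvC
  have hform : ∀ (w : S) (ww : Fin k → Polynomial K),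
      w = ∑ i, Polynomial.eval₂ (O.ι.comp Polynomial.C) a (ww i) * bas i →
      Th * w = ∑ i, ∑ j, EvH (ww i * Gm.adjugate i j) * b ^ ((j : Fin k):ℕ) := by
    intro w ww hww
    rw [hww, Finset.mul_sum]
    refine Finset.sum_congr rfl fun i _ => ?_
    rw [hEvH]
    have h1 : Th * (EvH (ww i) * bas i) = EvH (ww i) * (Th * bas i) := by
      rw [← mul_assoc, ← mul_assoc, hTh, ← map_mul, ← map_mul, mul_comm (Gm.det) (ww i)]
    rw [h1, hkey i, Finset.mul_sum]
    refine Finset.sum_congr rfl fun j _ => ?_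
    rw [← mul_assoc, ← map_mul]
  -- pairwise commutation of span elements
  have hbEv : ∀ γ : Polynomial K, Commute b (EvH γ) :=
    fun γ => commute_Ev O hσK hδK hbC γ
  have hpair : ∀ (γ1 γ2 : Polynomial K) (j1 j2 : ℕ),
      Commute (EvH γ1 * b ^ j1) (EvH γ2 * b ^ j2) := by
    intro γ1 γ2 j1 j2
    have hEvEv : Commute (EvH γ1) (EvH γ2) := by
      show EvH γ1 * EvH γ2 = EvH γ2 * EvH γ1
      rw [← map_mul, ← map_mul, mul_comm]
    have c1 : Commute (EvH γ1) (EvH γ2 * b ^ j2) :=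
      hEvEv.mul_right (((hbEv γ1).symm).pow_right j2)
    have c2 : Commute (b ^ j1) (EvH γ2 * b ^ j2) :=
      ((hbEv γ2).pow_left j1).mul_right ((Commute.refl b).pow_pow j1 j2)
    exact c1.mul_left c2
  have hcomm2 : Commute (Th * u) (Th * v) := by
    rw [hform u fu hfu, hform v fv hfv]
    apply Commute.sum_left
    intro i _
    apply Commute.sum_left
    intro j _
    apply Commute.sum_right
    intro i' _
    apply Commute.sum_right
    intro j' _
    exact hpair _ _ _ _
  have hcu : u * Th = Th * u := commute_Ev O hσK hδK huC Gm.det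
  have hcv : v * Th = Th * v := commute_Ev O hσK hδK hvC Gm.det
  have e1 : (Th*u)*(Th*v) = (Th*Th)*(u*v) := by
    rw [← mul_assoc (Th*u) Th v, mul_assoc Th u Th, hcu, ← mul_assoc Th Th u,
      mul_assoc (Th*Th) u v]
  have e2 : (Th*v)*(Th*u) = (Th*Th)*(v*u) := by
    rw [← mul_assoc (Th*v) Th u, mul_assoc Th v Th, hcv, ← mul_assoc Th Th v,
      mul_assoc (Th*Th) v u]
  have e3 : (Th*Th)*(u*v) = (Th*Th)*(v*u) := by
    rw [← e1, ← e2, hcomm2.eq]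
  exact mul_left_cancel_S O hs hσK (mul_ne_zero_S O hs hσK hTh0 hTh0) e3



end Stmt16Aux

theorem stmt16 {K S : Type*} [Field K] [Ring S]
    (σ : Polynomial K →+* Polynomial K) (δ : Polynomial K → Polynomial K)
    (O : OreExt K S σ δ)
    (hs : 1 < (σ Polynomial.X).natDegree)
    (hσK : ∀ c : K, σ (Polynomial.C c) = Polynomial.C c)
    (hδK : ∀ c : K, δ (Polynomial.C c) = 0)
    (a : S) (ha : ∀ c : K, a ≠ O.ι (Polynomial.C c)) :
    (∀ u v : S, u * a = a * u → v * a = a * v → u * v = v * u) ∧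
    ∃ (k : ℕ) (bas : Fin k → S),
      (∀ i, bas i * a = a * bas i) ∧
      (∀ c : S, c * a = a * c → ∃ φ : Fin k → Polynomial K,
        c = ∑ i, Polynomial.eval₂ (O.ι.comp Polynomial.C) a (φ i) * bas i) ∧
      (∀ φ : Fin k → Polynomial K,
        ∑ i, Polynomial.eval₂ (O.ι.comp Polynomial.C) a (φ i) * bas i = 0 →
          ∀ i, φ i = 0) := by
  by_cases hn : 1 ≤ Stmt16Aux.dS O a
  · exact Stmt16Aux.main_case1 O hs hσK hδK a hn
  · exact Stmt16Aux.main_case0 O hs hσK hδK a ha (by omega)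
end
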